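/- arXiv:1107.4293 — 10 statements merged into one kernel-verified Lean document; each statement's English description precedes it below -/
import Mathlib

section
/- Suppose assumptions (A1) and (A2) hold and the continuity bound b(w,v) ≤ C₂‖w‖_U‖v‖_V holds. Then for every continuous linear functional l : V → ℝ there exists a unique 𝒰 ∈ U such that b(𝒰, v) = l(v) for all v ∈ V, and moreover C₁‖𝒰‖_U ≤ ‖l‖_{V'}, where ‖l‖_{V'} = sup_{0≠v∈V} l(v)/‖v‖_V. -/
/-!
Let `S : V → U` be the Riesz representative of `b` in its first argument, `⟪S v, w⟫ = b w v`.
Then (A2) says `C₁ ‖v‖ ≤ ‖S v‖`, so `S` is injective with closed range, and (A1) says the range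
of `S` has trivial orthogonal complement; hence `S` is an isomorphism. The solution is the Riesz
representative of `l ∘ S⁻¹`, and testing the equation with `v₀ = S⁻¹ 𝒰` gives
`‖𝒰‖² = l v₀ ≤ ‖l‖ ‖v₀‖ ≤ ‖l‖ ‖𝒰‖ / C₁`.
-/

open InnerProductSpace

theorem LinearMap.abs_apply₂_le_of_apply₂_le {E F : Type*} [SeminormedAddCommGroup E] [Module ℝ E]
    [SeminormedAddCommGroup F] [Module ℝ F] (b : E →ₗ[ℝ] F →ₗ[ℝ] ℝ) {C : ℝ}
    (hb : ∀ x y, b x y ≤ C * ‖x‖ * ‖y‖) (x : E) (y : F) : |b x y| ≤ C * ‖x‖ * ‖y‖ :=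
  abs_le.2 ⟨neg_le.1 (by simpa using hb (-x) y), hb x y⟩

theorem iSup_inner_div_norm_le {U : Type*} [NormedAddCommGroup U] [InnerProductSpace ℝ U]
    (x : U) : ⨆ w : {w : U // w ≠ 0}, ⟪x, w.1⟫_ℝ / ‖w.1‖ ≤ ‖x‖ :=
  Real.iSup_le (fun w => div_le_of_le_mul₀ (norm_nonneg _) (norm_nonneg _)
    (real_inner_le_norm x w.1)) (norm_nonneg x)

section

variable {U V : Type*} [NormedAddCommGroup U] [InnerProductSpace ℝ U]
  [NormedAddCommGroup V] [NormedSpace ℝ V]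

noncomputable def rieszOperator [CompleteSpace U] (B : V →L[ℝ] U →L[ℝ] ℝ) : V →L[ℝ] U where
  toFun v := (toDual ℝ U).symm (B v)
  map_add' _ _ := by simp
  map_smul' _ _ := by simp
  cont := (toDual ℝ U).symm.continuous.comp B.continuous

@[simp]
theorem inner_rieszOperator_apply [CompleteSpace U] (B : V →L[ℝ] U →L[ℝ] ℝ) (v : V) (w : U) :
    ⟪rieszOperator B v, w⟫_ℝ = B v w :=
  toDual_symm_apply

theorem ContinuousLinearMap.bijective_of_lower_bound_of_orthogonal_range_eq_bot
    [CompleteSpace U] [CompleteSpace V] (S : V →L[ℝ] U) {C : ℝ} (hC : 0 < C)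
    (hlow : ∀ v, C * ‖v‖ ≤ ‖S v‖) (horth : S.rangeᗮ = ⊥) : Function.Bijective S := by
  have hanti : AntilipschitzWith ⟨C⁻¹, by positivity⟩ S :=
    S.antilipschitz_of_bound fun v => by
      change ‖v‖ ≤ C⁻¹ * ‖S v‖
      rw [le_inv_mul_iff₀ hC]
      exact hlow v
  exact S.bijective_iff_dense_range_and_antilipschitz.2
    ⟨Submodule.topologicalClosure_eq_top_iff.2 horth, _, hanti⟩

theorem ContinuousLinearMap.exists_inner_apply_eq_of_bijective [CompleteSpace U]
    [CompleteSpace V] {S : V →L[ℝ] U} (hS : Function.Bijective S) (l : V →L[ℝ] ℝ) :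
    ∃ u : U, ∀ v, ⟪S v, u⟫_ℝ = l v := by
  let E := ContinuousLinearEquiv.ofBijective S (LinearMap.ker_eq_bot.2 hS.1)
    (LinearMap.range_eq_top.2 hS.2)
  refine ⟨(toDual ℝ U).symm (l ∘L (E.symm : U →L[ℝ] V)), fun v => ?_⟩
  rw [real_inner_comm, toDual_symm_apply]
  change l (E.symm (E v)) = l v
  exact congrArg l (E.symm_apply_apply v)

theorem ContinuousLinearMap.mul_norm_apply_le_opNorm_of_inner_apply_eq (S : V →L[ℝ] U) {C : ℝ}
    (hC : 0 ≤ C) (hlow : ∀ v, C * ‖v‖ ≤ ‖S v‖) {l : V →L[ℝ] ℝ} {v₀ : V}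
    (hl : ∀ v, ⟪S v, S v₀⟫_ℝ = l v) : C * ‖S v₀‖ ≤ ‖l‖ := by
  have hsq : ‖S v₀‖ ^ 2 ≤ ‖l‖ * ‖v₀‖ := by
    rw [← real_inner_self_eq_norm_sq, hl]
    exact (le_abs_self _).trans (l.le_opNorm v₀)
  rcases (norm_nonneg (S v₀)).eq_or_lt with h0 | hpos
  · rw [← h0, mul_zero]
    exact norm_nonneg l
  · refine le_of_mul_le_mul_right ?_ hpos
    calc C * ‖S v₀‖ * ‖S v₀‖ = C * ‖S v₀‖ ^ 2 := by ring
      _ ≤ C * (‖l‖ * ‖v₀‖) := mul_le_mul_of_nonneg_left hsq hC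
      _ = ‖l‖ * (C * ‖v₀‖) := by ring
      _ ≤ ‖l‖ * ‖S v₀‖ := mul_le_mul_of_nonneg_left (hlow v₀) (norm_nonneg l)

end

theorem wellposedness_of_infsup_general
    {U V : Type*} [NormedAddCommGroup U] [InnerProductSpace ℝ U] [CompleteSpace U]
    [NormedAddCommGroup V] [InnerProductSpace ℝ V] [CompleteSpace V]
    (b : U →ₗ[ℝ] V →ₗ[ℝ] ℝ) (C₁ C₂ : ℝ)
    (hC₁ : 0 < C₁)
    -- (A1)
    (hA1 : ∀ w : U, (∀ v : V, b w v = 0) → w = 0)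
    -- (A2)
    (hA2 : ∀ v : V, C₁ * ‖v‖ ≤ ⨆ w : {w : U // w ≠ 0}, b w.1 v / ‖w.1‖)
    -- continuity bound
    (hb : ∀ (w : U) (v : V), b w v ≤ C₂ * ‖w‖ * ‖v‖)
    (l : V →L[ℝ] ℝ) :
    ∃ 𝒰 : U, (∀ v : V, b 𝒰 v = l v) ∧ C₁ * ‖𝒰‖ ≤ ‖l‖ ∧
      ∀ 𝒰' : U, (∀ v : V, b 𝒰' v = l v) → 𝒰' = 𝒰 := by
  let S := rieszOperator (LinearMap.mkContinuous₂ b.flip C₂ fun v w => by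
    simpa [mul_right_comm] using b.abs_apply₂_le_of_apply₂_le hb w v)
  have hS : ∀ v w, ⟪S v, w⟫_ℝ = b w v := fun v w => inner_rieszOperator_apply _ v w
  have hlow : ∀ v, C₁ * ‖v‖ ≤ ‖S v‖ := fun v =>
    (hA2 v).trans (by simpa only [hS] using iSup_inner_div_norm_le (S v))
  have horth : S.rangeᗮ = ⊥ := (Submodule.eq_bot_iff _).2 fun u hu =>
    hA1 u fun v => (hS v u).symm.trans ((Submodule.mem_orthogonal _ _).1 hu _ ⟨v, rfl⟩)
  have hbij := S.bijective_of_lower_bound_of_orthogonal_range_eq_bot hC₁ hlow horth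
  obtain ⟨𝒰, h𝒰⟩ := S.exists_inner_apply_eq_of_bijective hbij l
  have hsol : ∀ v, b 𝒰 v = l v := fun v => (hS v 𝒰).symm.trans (h𝒰 v)
  refine ⟨𝒰, hsol, ?_, fun 𝒰' hsol' => sub_eq_zero.1 (hA1 _ fun v => by simp [hsol', hsol])⟩
  obtain ⟨v₀, rfl⟩ := hbij.2 𝒰
  exact S.mul_norm_apply_le_opNorm_of_inner_apply_eq hC₁.le hlow h𝒰

/-- Well-posedness of the variational problem under assumptions (A1), (A2) and continuity:
existence and uniqueness of the solution, together with the stability bound `C₁‖𝒰‖ ≤ ‖l‖`. -/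
theorem wellposedness_of_infsup
    {U V : Type*} [NormedAddCommGroup U] [InnerProductSpace ℝ U] [CompleteSpace U]
    [NormedAddCommGroup V] [InnerProductSpace ℝ V] [CompleteSpace V]
    (b : U →ₗ[ℝ] V →ₗ[ℝ] ℝ) (C₁ C₂ : ℝ)
    (hC₁ : 0 < C₁) (hC₂ : 0 ≤ C₂)
    -- (A1)
    (hA1 : ∀ w : U, (∀ v : V, b w v = 0) → w = 0)
    -- (A2)
    (hA2 : ∀ v : V, C₁ * ‖v‖ ≤ ⨆ w : {w : U // w ≠ 0}, b w.1 v / ‖w.1‖)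
    -- continuity bound
    (hb : ∀ (w : U) (v : V), b w v ≤ C₂ * ‖w‖ * ‖v‖)
    (l : V →L[ℝ] ℝ) :
    ∃ 𝒰 : U, (∀ v : V, b 𝒰 v = l v) ∧ C₁ * ‖𝒰‖ ≤ ‖l‖ ∧
      ∀ 𝒰' : U, (∀ v : V, b 𝒰' v = l v) → 𝒰' = 𝒰 :=
  wellposedness_of_infsup_general b C₁ C₂ hC₁ hA1 hA2 hb l
end

section
/- Suppose assumptions (A1) and (A2) hold and the continuity bound b(w,v) ≤ C₂‖w‖_U‖v‖_V holds. Then the inf-sup condition C₁‖w‖_U ≤ sup_{0≠v∈V} b(w,v)/‖v‖_V holds for every w ∈ U, with the same constant C₁ as in (A2). -/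
open scoped RealInnerProductSpace
open ContinuousLinearMap

/-!
Represent `b` by `T : U →L[ℝ] V` with `⟪T w, v⟫ = b w v` (Riesz). Both suprema are then norms:
the one in (A2) is `‖T* v‖` and the one in the conclusion is `‖T w‖`. By (A2), `T*` is bounded
below by `C₁`, so its range is closed; by (A1), `ker T = 0`, so that range is also dense. Hence
`T*` is onto, and for `w = T* v` we get `‖w‖² = ⟪v, T w⟫ ≤ ‖v‖ ‖T w‖ ≤ C₁⁻¹ ‖w‖ ‖T w‖`.
-/

theorem iSup_inner_div_norm_eq_norm {E : Type*} [NormedAddCommGroup E] [InnerProductSpace ℝ E]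
    (x : E) : ⨆ y : {y : E // y ≠ 0}, ⟪x, y.1⟫ / ‖y.1‖ = ‖x‖ := by
  have hle : ∀ y : {y : E // y ≠ 0}, ⟪x, y.1⟫ / ‖y.1‖ ≤ ‖x‖ := fun y =>
    div_le_of_le_mul₀ (norm_nonneg _) (norm_nonneg x) (real_inner_le_norm x y)
  refine le_antisymm (Real.iSup_le hle (norm_nonneg x)) ?_
  rcases eq_or_ne x 0 with rfl | hx
  · simp
  · calc ‖x‖ = ⟪x, x⟫ / ‖x‖ := by
          rw [real_inner_self_eq_norm_mul_norm, mul_div_cancel_right₀ _ (norm_ne_zero_iff.2 hx)]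
      _ ≤ _ := le_ciSup ⟨‖x‖, Set.forall_mem_range.2 hle⟩ (⟨x, hx⟩ : {y : E // y ≠ 0})

theorem exists_inner_apply_eq_of_apply_le_mul_norm {U V : Type*} [NormedAddCommGroup U]
    [InnerProductSpace ℝ U] [NormedAddCommGroup V] [InnerProductSpace ℝ V] [CompleteSpace V]
    (b : U →ₗ[ℝ] V →ₗ[ℝ] ℝ) (C : ℝ) (hb : ∀ w v, b w v ≤ C * ‖w‖ * ‖v‖) :
    ∃ T : U →L[ℝ] V, ∀ w v, ⟪T w, v⟫ = b w v := by
  have hnorm : ∀ w v, ‖b w v‖ ≤ C * ‖w‖ * ‖v‖ := fun w v =>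
    abs_le.2 ⟨by simpa using neg_le_neg (hb (-w) v), hb w v⟩
  exact ⟨(InnerProductSpace.toDual ℝ V).symm.toContinuousLinearEquiv.toContinuousLinearMap.comp
    (b.mkContinuous₂ C hnorm), fun w v => by simp [InnerProductSpace.toDual_symm_apply]⟩

namespace ContinuousLinearMap

variable {𝕜 E F : Type*} [RCLike 𝕜] [NormedAddCommGroup E] [InnerProductSpace 𝕜 E] [CompleteSpace E]
  [NormedAddCommGroup F] [InnerProductSpace 𝕜 F] [CompleteSpace F]

theorem range_adjoint_eq_top_of_bounded_below {A : E →L[𝕜] F} (hA : A.ker = ⊥) {c : ℝ}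
    (hc : 0 < c) (hbelow : ∀ y, c * ‖y‖ ≤ ‖(adjoint A) y‖) : (adjoint A).range = ⊤ := by
  obtain ⟨K, hK⟩ : ∃ K, AntilipschitzWith K (adjoint A) :=
    antilipschitzWith_iff_exists_mul_le_norm.2 ⟨c, hc, hbelow⟩
  have hclosed : IsClosed ((adjoint A).range : Set E) := by
    rw [LinearMap.coe_range]
    exact hK.isClosed_range (adjoint A).uniformContinuous
  rw [← hclosed.submodule_topologicalClosure_eq, ← orthogonal_ker, hA,
    Submodule.bot_orthogonal_eq_top]

theorem bounded_below_of_adjoint_bounded_below {A : E →L[𝕜] F} (hA : A.ker = ⊥) {c : ℝ}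
    (hc : 0 < c) (hbelow : ∀ y, c * ‖y‖ ≤ ‖(adjoint A) y‖) (x : E) : c * ‖x‖ ≤ ‖A x‖ := by
  obtain ⟨y, hy⟩ : ∃ y, adjoint A y = x :=
    (range_adjoint_eq_top_of_bounded_below hA hc hbelow).ge trivial
  have key : ‖x‖ * (c * ‖x‖) ≤ ‖x‖ * ‖A x‖ :=
    calc ‖x‖ * (c * ‖x‖) = c * ‖inner 𝕜 (adjoint A y) x‖ := by
          rw [hy, inner_self_eq_norm_sq_to_K, norm_pow, RCLike.norm_ofReal, abs_norm]; ring
      _ = c * ‖inner 𝕜 y (A x)‖ := by rw [adjoint_inner_left]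
      _ ≤ c * (‖y‖ * ‖A x‖) := by gcongr; exact norm_inner_le_norm _ _
      _ ≤ ‖x‖ * ‖A x‖ := by rw [← mul_assoc, ← hy]; gcongr; exact hbelow y
  rcases (norm_nonneg x).eq_or_lt with hx | hx
  · simp [← hx]
  · exact le_of_mul_le_mul_left key hx

end ContinuousLinearMap

theorem infsup_transfer_general
    {U V : Type*} [NormedAddCommGroup U] [InnerProductSpace ℝ U] [CompleteSpace U]
    [NormedAddCommGroup V] [InnerProductSpace ℝ V] [CompleteSpace V]
    (b : U →ₗ[ℝ] V →ₗ[ℝ] ℝ) (C₁ C₂ : ℝ)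
    (hC₁ : 0 < C₁)
    -- (A1)
    (hA1 : ∀ w : U, (∀ v : V, b w v = 0) → w = 0)
    -- (A2)
    (hA2 : ∀ v : V, C₁ * ‖v‖ ≤ ⨆ w : {w : U // w ≠ 0}, b w.1 v / ‖w.1‖)
    -- continuity bound
    (hb : ∀ (w : U) (v : V), b w v ≤ C₂ * ‖w‖ * ‖v‖) :
    ∀ w : U, C₁ * ‖w‖ ≤ ⨆ v : {v : V // v ≠ 0}, b w v.1 / ‖v.1‖ := by
  obtain ⟨T, hT⟩ := exists_inner_apply_eq_of_apply_le_mul_norm b C₂ hb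
  have hker : T.ker = ⊥ :=
    LinearMap.ker_eq_bot'.2 fun w hw => hA1 w fun v => by
      rw [← hT, show T w = 0 from hw, inner_zero_left]
  have hbelow (v : V) : C₁ * ‖v‖ ≤ ‖adjoint T v‖ := by
    have hadj (w : U) : b w v = ⟪adjoint T v, w⟫ := by
      rw [← hT, ← adjoint_inner_right, real_inner_comm]
    simpa only [hadj, iSup_inner_div_norm_eq_norm] using hA2 v
  intro w
  simpa only [← hT, iSup_inner_div_norm_eq_norm]
    using bounded_below_of_adjoint_bounded_below hker hC₁ hbelow w

/-- Under (A1), (A2) and the continuity bound, the inf-sup condition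
`C₁‖w‖_U ≤ sup_{0≠v∈V} b(w,v)/‖v‖_V` holds for every `w ∈ U`, with the same constant `C₁`. -/
theorem infsup_transfer
    {U V : Type*} [NormedAddCommGroup U] [InnerProductSpace ℝ U] [CompleteSpace U]
    [NormedAddCommGroup V] [InnerProductSpace ℝ V] [CompleteSpace V]
    (b : U →ₗ[ℝ] V →ₗ[ℝ] ℝ) (C₁ C₂ : ℝ)
    (hC₁ : 0 < C₁) (hC₂ : 0 ≤ C₂)
    -- (A1)
    (hA1 : ∀ w : U, (∀ v : V, b w v = 0) → w = 0)
    -- (A2)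
    (hA2 : ∀ v : V, C₁ * ‖v‖ ≤ ⨆ w : {w : U // w ≠ 0}, b w.1 v / ‖w.1‖)
    -- continuity bound
    (hb : ∀ (w : U) (v : V), b w v ≤ C₂ * ‖w‖ * ‖v‖) :
    ∀ w : U, C₁ * ‖w‖ ≤ ⨆ v : {v : V // v ≠ 0}, b w v.1 / ‖v.1‖ :=
  infsup_transfer_general b C₁ C₂ hC₁ hA1 hA2 hb
end

section
/- Suppose assumptions (A1) and (A2) hold and the continuity bound b(w,v) ≤ C₂‖w‖_U‖v‖_V holds. Then the two inf-sup constants of b coincide: inf_{0≠w∈U} sup_{0≠v∈V} |b(w,v)|/(‖w‖_U‖v‖_V) = inf_{0≠v∈V} sup_{0≠w∈U} |b(w,v)|/(‖w‖_U‖v‖_V). -/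
/-!
Represent `b` by `T : U →L V` with `⟪T w, v⟫ = b w v` (Riesz) and put `S = T†`, so that
`⟪S v, w⟫ = b w v`. By Cauchy–Schwarz the inner suprema are `‖T w‖ / ‖w‖` and `‖S v‖ / ‖v‖`.
(A2) bounds `S` below and (A1) says `ker S† = ker T = 0`, i.e. `S` has dense range, so `S` is an
isomorphism and so is `T = S†`. For an isomorphism `e` the infimum of `‖e x‖ / ‖x‖` is `‖e⁻¹‖⁻¹`,
and `‖(S†)⁻¹‖ = ‖(S⁻¹)†‖ = ‖S⁻¹‖`.
-/

open ContinuousLinearMap InnerProductSpace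
open scoped NNReal RealInnerProductSpace

namespace ContinuousLinearEquiv

section Adjoint

variable {𝕜 E F : Type*} [RCLike 𝕜] [NormedAddCommGroup E] [InnerProductSpace 𝕜 E]
  [CompleteSpace E] [NormedAddCommGroup F] [InnerProductSpace 𝕜 F] [CompleteSpace F]

noncomputable def adjoint (e : E ≃L[𝕜] F) : F ≃L[𝕜] E :=
  equivOfInverse (ContinuousLinearMap.adjoint (e : E →L[𝕜] F))
    (ContinuousLinearMap.adjoint (e.symm : F →L[𝕜] E))
    (fun y => by
      rw [← ContinuousLinearMap.comp_apply, ← adjoint_comp, coe_comp_coe_symm, adjoint_id,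
        ContinuousLinearMap.id_apply])
    (fun x => by
      rw [← ContinuousLinearMap.comp_apply, ← adjoint_comp, coe_symm_comp_coe, adjoint_id,
        ContinuousLinearMap.id_apply])

theorem norm_adjoint_symm (e : E ≃L[𝕜] F) :
    ‖(e.adjoint.symm : E →L[𝕜] F)‖ = ‖(e.symm : F →L[𝕜] E)‖ :=
  ContinuousLinearMap.adjoint.norm_map _

end Adjoint

variable {𝕜 E F : Type*} [NontriviallyNormedField 𝕜] [NormedAddCommGroup E] [NormedSpace 𝕜 E]
  [NormedAddCommGroup F] [NormedSpace 𝕜 F]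

theorem iInf_norm_apply_div_norm (e : E ≃L[𝕜] F) :
    ⨅ x : {x : E // x ≠ 0}, ‖e x.1‖ / ‖x.1‖ = ‖(e.symm : F →L[𝕜] E)‖⁻¹ := by
  rcases subsingleton_or_nontrivial E with hE | hE
  · have : IsEmpty {x : E // x ≠ 0} := ⟨fun x => x.2 (Subsingleton.elim _ _)⟩
    rw [Real.iInf_of_isEmpty, Subsingleton.elim (e.symm : F →L[𝕜] E) 0, norm_zero, inv_zero]
  obtain ⟨x₀, hx₀⟩ := exists_ne (0 : E)
  have hN : 0 < ‖(e.symm : F →L[𝕜] E)‖ :=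
    norm_pos_iff.mpr fun h => hx₀ (by simpa using DFunLike.congr_fun h (e x₀))
  have hbdd : BddBelow (Set.range fun x : {x : E // x ≠ 0} => ‖e x.1‖ / ‖x.1‖) :=
    ⟨0, by rintro _ ⟨x, rfl⟩; positivity⟩
  have : Nonempty {x : E // x ≠ 0} := ⟨⟨x₀, hx₀⟩⟩
  refine le_antisymm ?_ (le_ciInf fun x => ?_)
  · set m := ⨅ x : {x : E // x ≠ 0}, ‖e x.1‖ / ‖x.1‖
    rcases le_or_gt m 0 with hm | hm
    · exact hm.trans (inv_nonneg.mpr hN.le)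
    have hlower : ∀ x, m * ‖x‖ ≤ ‖e x‖ := fun x => by
      rcases eq_or_ne x 0 with rfl | hx
      · simp
      · exact (le_div_iff₀ (norm_pos_iff.mpr hx)).mp (ciInf_le hbdd ⟨x, hx⟩)
    refine (le_inv_comm₀ hm hN).mpr (opNorm_le_bound _ (inv_nonneg.mpr hm.le) fun y => ?_)
    rw [le_inv_mul_iff₀ hm]
    simpa using hlower (e.symm y)
  · rw [le_div_iff₀ (norm_pos_iff.mpr x.2), inv_mul_le_iff₀ hN]
    simpa using (e.symm : F →L[𝕜] E).le_opNorm (e x.1)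

end ContinuousLinearEquiv

theorem ContinuousLinearMap.bijective_of_antilipschitz_of_ker_adjoint_eq_bot
    {𝕜 E F : Type*} [RCLike 𝕜] [NormedAddCommGroup E] [InnerProductSpace 𝕜 E] [CompleteSpace E]
    [NormedAddCommGroup F] [InnerProductSpace 𝕜 F] [CompleteSpace F]
    {S : E →L[𝕜] F} {c : ℝ≥0} (hS : AntilipschitzWith c S) (hker : (adjoint S).ker = ⊥) :
    Function.Bijective S :=
  S.bijective_iff_dense_range_and_antilipschitz.mpr
    ⟨by rw [Submodule.topologicalClosure_eq_top_iff, orthogonal_range, hker], c, hS⟩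

section RealInnerProductSpace

variable {E : Type*} [NormedAddCommGroup E] [InnerProductSpace ℝ E]

theorem iSup_inner_div_norm_le_s3 (a : E) : ⨆ w : {w : E // w ≠ 0}, ⟪a, w.1⟫ / ‖w.1‖ ≤ ‖a‖ :=
  Real.iSup_le (fun _ => div_le_of_le_mul₀ (norm_nonneg _) (norm_nonneg a)
    (real_inner_le_norm _ _)) (norm_nonneg a)

theorem iSup_abs_inner_div_mul_norm (a : E) {c : ℝ} (hc : 0 ≤ c) :
    ⨆ v : {v : E // v ≠ 0}, |⟪a, v.1⟫| / (c * ‖v.1‖) = ‖a‖ / c := by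
  have hle : ∀ v : {v : E // v ≠ 0}, |⟪a, v.1⟫| / (c * ‖v.1‖) ≤ ‖a‖ / c := fun v => by
    rw [mul_comm, ← div_div]
    gcongr
    exact div_le_of_le_mul₀ (norm_nonneg _) (norm_nonneg a) (abs_real_inner_le_norm a v.1)
  refine le_antisymm (Real.iSup_le hle (by positivity)) ?_
  rcases eq_or_ne a 0 with rfl | ha
  · simp
  refine le_ciSup_of_le ⟨‖a‖ / c, by rintro _ ⟨v, rfl⟩; exact hle v⟩ ⟨a, ha⟩ (le_of_eq ?_)
  rw [real_inner_self_eq_norm_sq, abs_of_nonneg (by positivity), mul_comm, ← div_div, sq,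
    mul_div_cancel_right₀ _ (norm_ne_zero_iff.mpr ha)]

end RealInnerProductSpace

theorem LinearMap.exists_inner_apply_eq_of_apply_le {U V : Type*} [NormedAddCommGroup U]
    [InnerProductSpace ℝ U] [NormedAddCommGroup V] [InnerProductSpace ℝ V] [CompleteSpace V]
    (b : U →ₗ[ℝ] V →ₗ[ℝ] ℝ) {C : ℝ} (hb : ∀ w v, b w v ≤ C * ‖w‖ * ‖v‖) :
    ∃ T : U →L[ℝ] V, ∀ w v, ⟪T w, v⟫ = b w v := by
  have hnorm : ∀ w v, ‖b w v‖ ≤ C * ‖w‖ * ‖v‖ := fun w v => by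
    have hneg := hb w (-v)
    rw [map_neg, norm_neg] at hneg
    exact abs_le.mpr ⟨by linarith, hb w v⟩
  exact ⟨(toDual ℝ V).symm.toContinuousLinearEquiv.toContinuousLinearMap ∘L
    b.mkContinuous₂ C hnorm, fun _ _ => toDual_symm_apply⟩

theorem infsup_constants_coincide_general
    {U V : Type*} [NormedAddCommGroup U] [InnerProductSpace ℝ U] [CompleteSpace U]
    [NormedAddCommGroup V] [InnerProductSpace ℝ V] [CompleteSpace V]
    (b : U →ₗ[ℝ] V →ₗ[ℝ] ℝ) (C₁ C₂ : ℝ)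
    (hC₁ : 0 < C₁)
    -- (A1)
    (hA1 : ∀ w : U, (∀ v : V, b w v = 0) → w = 0)
    -- (A2)
    (hA2 : ∀ v : V, C₁ * ‖v‖ ≤ ⨆ w : {w : U // w ≠ 0}, b w.1 v / ‖w.1‖)
    -- continuity bound
    (hb : ∀ (w : U) (v : V), b w v ≤ C₂ * ‖w‖ * ‖v‖) :
    (⨅ w : {w : U // w ≠ 0}, ⨆ v : {v : V // v ≠ 0}, |b w.1 v.1| / (‖w.1‖ * ‖v.1‖)) =
      ⨅ v : {v : V // v ≠ 0}, ⨆ w : {w : U // w ≠ 0}, |b w.1 v.1| / (‖w.1‖ * ‖v.1‖) := by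
  obtain ⟨T, hT⟩ := b.exists_inner_apply_eq_of_apply_le hb
  set S := ContinuousLinearMap.adjoint T
  have hS : ∀ w v, ⟪S v, w⟫ = b w v := fun w v => by
    rw [adjoint_inner_left, real_inner_comm, hT]
  have hS_anti : AntilipschitzWith ⟨C₁⁻¹, inv_nonneg.mpr hC₁.le⟩ S :=
    S.antilipschitz_of_bound fun v => (le_inv_mul_iff₀ hC₁).mpr <|
      (hA2 v).trans <| by simpa only [real_inner_comm, hS] using iSup_inner_div_norm_le_s3 (S v)
  have hT_ker : (ContinuousLinearMap.adjoint S).ker = ⊥ := by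
    rw [adjoint_adjoint, Submodule.eq_bot_iff]
    exact fun w hw => hA1 w fun v => by rw [← hT, show T w = 0 from hw, inner_zero_left]
  have hS_bij := bijective_of_antilipschitz_of_ker_adjoint_eq_bot hS_anti hT_ker
  set e := ContinuousLinearEquiv.ofBijective S (LinearMap.ker_eq_bot_of_injective hS_bij.1)
    (LinearMap.range_eq_top.mpr hS_bij.2)
  have he_adjoint : ⇑e.adjoint = T := adjoint_adjoint T ▸ rfl
  calc _ = ⨅ w : {w : U // w ≠ 0}, ‖e.adjoint w.1‖ / ‖w.1‖ := iInf_congr fun w => by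
          simp only [he_adjoint, ← hT, iSup_abs_inner_div_mul_norm _ (norm_nonneg w.1)]
    _ = ⨅ v : {v : V // v ≠ 0}, ‖e v.1‖ / ‖v.1‖ := by
          rw [e.iInf_norm_apply_div_norm, e.adjoint.iInf_norm_apply_div_norm, e.norm_adjoint_symm]
    _ = _ := iInf_congr fun v => by
          simp only [← hS, mul_comm ‖_‖ ‖v.1‖, iSup_abs_inner_div_mul_norm _ (norm_nonneg v.1)]
          rfl

/-- Under (A1), (A2) and the continuity bound, the two inf-sup constants of `b` coincide. -/
theorem infsup_constants_coincide
    {U V : Type*} [NormedAddCommGroup U] [InnerProductSpace ℝ U] [CompleteSpace U]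
    [NormedAddCommGroup V] [InnerProductSpace ℝ V] [CompleteSpace V]
    (b : U →ₗ[ℝ] V →ₗ[ℝ] ℝ) (C₁ C₂ : ℝ)
    (hC₁ : 0 < C₁) (hC₂ : 0 ≤ C₂)
    -- (A1)
    (hA1 : ∀ w : U, (∀ v : V, b w v = 0) → w = 0)
    -- (A2)
    (hA2 : ∀ v : V, C₁ * ‖v‖ ≤ ⨆ w : {w : U // w ≠ 0}, b w.1 v / ‖w.1‖)
    -- continuity bound
    (hb : ∀ (w : U) (v : V), b w v ≤ C₂ * ‖w‖ * ‖v‖) :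
    (⨅ w : {w : U // w ≠ 0}, ⨆ v : {v : V // v ≠ 0}, |b w.1 v.1| / (‖w.1‖ * ‖v.1‖)) =
      ⨅ v : {v : V // v ≠ 0}, ⨆ w : {w : U // w ≠ 0}, |b w.1 v.1| / (‖w.1‖ * ‖v.1‖) :=
  infsup_constants_coincide_general b C₁ C₂ hC₁ hA1 hA2 hb
end

section
/- Assume Vʳ ≠ {0}. For every w ∈ U_h, the following three quantities are equal: sup_{0≠v∈Vʳ} b(w,v)/‖v‖_V, the norm ‖Tʳw‖_V, and sup_{0≠v∈V_hʳ} b(w,v)/‖v‖_V (where a supremum over an empty index set is interpreted as 0). -/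
open scoped InnerProductSpace

/-! On `Vʳ` the form `b w` is `⟪Tʳw, ·⟫`, and both `Vʳ` and `Tʳ(U_h)` contain `Tʳw`. So each
supremum is a supremum of `⟪Tʳw, v⟫ / ‖v‖` over a set containing `Tʳw`: Cauchy–Schwarz bounds it
by `‖Tʳw‖`, and `v = Tʳw` attains the bound. -/

theorem iSup_inner_div_norm_eq_norm_s5 {V : Type*} [NormedAddCommGroup V] [InnerProductSpace ℝ V]
    {s : Set V} {x : V} (hx : x ∈ s) :
    ⨆ v : {v : V // v ∈ s ∧ v ≠ 0}, ⟪x, v.1⟫_ℝ / ‖v.1‖ = ‖x‖ := by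
  -- for `x = 0` the index set may be empty, where the real `⨆` is `0` as well
  rcases eq_or_ne x 0 with rfl | hx0
  · simp only [inner_zero_left, zero_div, Real.iSup_const_zero, norm_zero]
  have hle : ∀ v : {v : V // v ∈ s ∧ v ≠ 0}, ⟪x, v.1⟫_ℝ / ‖v.1‖ ≤ ‖x‖ := fun v =>
    (div_le_iff₀ (norm_pos_iff.2 v.2.2)).2 (real_inner_le_norm x v.1)
  have : Nonempty {v : V // v ∈ s ∧ v ≠ 0} := ⟨⟨x, hx, hx0⟩⟩
  refine le_antisymm (ciSup_le hle) (le_ciSup_of_le ⟨‖x‖, Set.forall_mem_range.2 hle⟩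
    ⟨x, hx, hx0⟩ (le_of_eq ?_))
  rw [real_inner_self_eq_norm_mul_norm, mul_div_cancel_right₀ _ (norm_ne_zero_iff.2 hx0)]

theorem sup_eq_norm_Tr_eq_sup_general
    {U V : Type*} [NormedAddCommGroup U] [InnerProductSpace ℝ U]
    [NormedAddCommGroup V] [InnerProductSpace ℝ V]
    (b : U →ₗ[ℝ] V →ₗ[ℝ] ℝ)
    (Uh : Submodule ℝ U) (Vr : Submodule ℝ V)
    -- trial-to-test operator
    (T : U →ₗ[ℝ] V) (hTmem : ∀ w : U, T w ∈ Vr)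
    (hT : ∀ w : U, ∀ v ∈ Vr, ⟪T w, v⟫_ℝ = b w v) :
    ∀ w ∈ Uh,
      (⨆ v : {v : V // v ∈ Vr ∧ v ≠ 0}, b w v.1 / ‖v.1‖) = ‖T w‖ ∧
      ‖T w‖ = ⨆ v : {v : V // v ∈ Submodule.map T Uh ∧ v ≠ 0}, b w v.1 / ‖v.1‖ := by
  intro w hw
  have sup_eq_norm : ∀ s : Set V, s ⊆ Vr → T w ∈ s →
      ⨆ v : {v : V // v ∈ s ∧ v ≠ 0}, b w v.1 / ‖v.1‖ = ‖T w‖ := fun s hs hws => by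
    rw [← iSup_inner_div_norm_eq_norm_s5 hws]
    exact iSup_congr fun v => by rw [hT w v.1 (hs v.2.1)]
  have map_le : Submodule.map T Uh ≤ Vr := by
    rintro _ ⟨u, -, rfl⟩
    exact hTmem u
  exact ⟨sup_eq_norm Vr le_rfl (hTmem w), (sup_eq_norm _ map_le ⟨w, hw, rfl⟩).symm⟩

/-- For `w ∈ U_h`, the supremum of `b(w,v)/‖v‖` over nonzero `v ∈ Vʳ`, the norm `‖Tʳw‖_V`,
and the supremum of `b(w,v)/‖v‖` over nonzero `v ∈ V_hʳ = Tʳ(U_h)` all coincide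
(empty suprema being interpreted as `0`). -/
theorem sup_eq_norm_Tr_eq_sup
    {U V : Type*} [NormedAddCommGroup U] [InnerProductSpace ℝ U] [CompleteSpace U]
    [NormedAddCommGroup V] [InnerProductSpace ℝ V] [CompleteSpace V]
    (b : U →ₗ[ℝ] V →ₗ[ℝ] ℝ)
    (Uh : Submodule ℝ U) (Vr : Submodule ℝ V)
    [FiniteDimensional ℝ Uh] [FiniteDimensional ℝ Vr]
    (hVr : Vr ≠ ⊥)
    -- trial-to-test operator
    (T : U →ₗ[ℝ] V) (hTmem : ∀ w : U, T w ∈ Vr)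
    (hT : ∀ w : U, ∀ v ∈ Vr, ⟪T w, v⟫_ℝ = b w v) :
    ∀ w ∈ Uh,
      (⨆ v : {v : V // v ∈ Vr ∧ v ≠ 0}, b w v.1 / ‖v.1‖) = ‖T w‖ ∧
      ‖T w‖ = ⨆ v : {v : V // v ∈ Submodule.map T Uh ∧ v ≠ 0}, b w v.1 / ‖v.1‖ :=
  sup_eq_norm_Tr_eq_sup_general b Uh Vr T hTmem hT
end

section
/- Suppose assumptions (A1) and (A2) hold, the continuity bound b(w,v) ≤ C₂‖w‖_U‖v‖_V holds, and a Fortin operator Π with constant C_Π > 0 exists. Then the restriction of Tʳ to U_h is injective; in particular, dim V_hʳ = dim U_h. -/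
open scoped InnerProductSpace

/-!
If `w ∈ U_h` and `Tʳ w = 0`, then `b(w, ·)` vanishes on `Vʳ`. The Fortin property
`b(w, v) = b(w, Πv)` with `Πv ∈ Vʳ` transports this to all of `V`, so `w = 0` by (A1).
Hence `U_h ∩ ker Tʳ = 0`, and `Tʳ` maps `U_h` isomorphically onto `V_hʳ`.
-/

theorem LinearMap.finrank_map_eq_of_injOn {R M N : Type*} [Ring R] [AddCommGroup M]
    [Module R M] [AddCommGroup N] [Module R N] {f : M →ₗ[R] N} {p : Submodule R M}
    (hf : Set.InjOn f p) : Module.finrank R (p.map f) = Module.finrank R p :=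
  (LinearEquiv.ofBijective (f.submoduleMap p)
    ⟨f.submoduleMap_injective_of_injOn hf, f.submoduleMap_surjective p⟩).finrank_eq.symm

section Fortin

variable {R U V : Type*} [CommRing R] [AddCommGroup U] [Module R U] [AddCommGroup V]
  [Module R V] {b : U →ₗ[R] V →ₗ[R] R} {Uh : Submodule R U} {Vr : Submodule R V} {Pi : V → V}

theorem apply_fortin_eq (hPi : ∀ w ∈ Uh, ∀ v : V, b w (v - Pi v) = 0) {w : U} (hw : w ∈ Uh)
    (v : V) : b w (Pi v) = b w v := by
  rw [eq_comm, ← sub_eq_zero, ← map_sub]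
  exact hPi w hw v

theorem eq_zero_of_forall_mem_apply_eq_zero_of_fortin
    (hA1 : ∀ w : U, (∀ v : V, b w v = 0) → w = 0) (hPimem : ∀ v : V, Pi v ∈ Vr)
    (hPi : ∀ w ∈ Uh, ∀ v : V, b w (v - Pi v) = 0) {w : U} (hw : w ∈ Uh)
    (hwVr : ∀ v ∈ Vr, b w v = 0) : w = 0 :=
  hA1 w fun v ↦ apply_fortin_eq hPi hw v ▸ hwVr (Pi v) (hPimem v)

end Fortin

theorem disjoint_ker_trialToTest_of_fortin {U V : Type*} [AddCommGroup U] [Module ℝ U]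
    [NormedAddCommGroup V] [InnerProductSpace ℝ V] {b : U →ₗ[ℝ] V →ₗ[ℝ] ℝ}
    {Uh : Submodule ℝ U} {Vr : Submodule ℝ V} {T : U →ₗ[ℝ] V} {Pi : V → V}
    (hA1 : ∀ w : U, (∀ v : V, b w v = 0) → w = 0)
    (hT : ∀ w : U, ∀ v ∈ Vr, ⟪T w, v⟫_ℝ = b w v) (hPimem : ∀ v : V, Pi v ∈ Vr)
    (hPi : ∀ w ∈ Uh, ∀ v : V, b w (v - Pi v) = 0) : Disjoint Uh (LinearMap.ker T) := by
  refine LinearMap.disjoint_ker.mpr fun w hw hTw ↦ ?_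
  refine eq_zero_of_forall_mem_apply_eq_zero_of_fortin hA1 hPimem hPi hw fun v hv ↦ ?_
  rw [← hT w v hv, hTw, inner_zero_left]

theorem Tr_injective_on_Uh_general
    {U V : Type*} [NormedAddCommGroup U] [InnerProductSpace ℝ U]
    [NormedAddCommGroup V] [InnerProductSpace ℝ V]
    (b : U →ₗ[ℝ] V →ₗ[ℝ] ℝ)
    -- (A1)
    (hA1 : ∀ w : U, (∀ v : V, b w v = 0) → w = 0)
    -- discrete spaces
    (Uh : Submodule ℝ U) (Vr : Submodule ℝ V)
    -- trial-to-test operator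
    (T : U →ₗ[ℝ] V)
    (hT : ∀ w : U, ∀ v ∈ Vr, ⟪T w, v⟫_ℝ = b w v)
    -- Fortin operator
    (Pi : V →ₗ[ℝ] V) (hPimem : ∀ v : V, Pi v ∈ Vr)
    (hPi : ∀ w ∈ Uh, ∀ v : V, b w (v - Pi v) = 0) :
    Set.InjOn T (Uh : Set U) ∧
      Module.finrank ℝ (Submodule.map T Uh) = Module.finrank ℝ Uh := by
  have hinj : Set.InjOn T (Uh : Set U) :=
    LinearMap.disjoint_ker_iff_injOn.mp (disjoint_ker_trialToTest_of_fortin hA1 hT hPimem hPi)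
  exact ⟨hinj, LinearMap.finrank_map_eq_of_injOn hinj⟩

/-- Under the assumptions of Theorem 2.1, the restriction of `Tʳ` to `U_h` is injective;
in particular `dim V_hʳ = dim U_h`. -/
theorem Tr_injective_on_Uh
    {U V : Type*} [NormedAddCommGroup U] [InnerProductSpace ℝ U] [CompleteSpace U]
    [NormedAddCommGroup V] [InnerProductSpace ℝ V] [CompleteSpace V]
    (b : U →ₗ[ℝ] V →ₗ[ℝ] ℝ) (C₁ C₂ Cpi : ℝ)
    (hC₁ : 0 < C₁) (hC₂ : 0 ≤ C₂) (hCpi : 0 < Cpi)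
    -- (A1)
    (hA1 : ∀ w : U, (∀ v : V, b w v = 0) → w = 0)
    -- (A2)
    (hA2 : ∀ v : V, C₁ * ‖v‖ ≤ ⨆ w : {w : U // w ≠ 0}, b w.1 v / ‖w.1‖)
    -- continuity bound
    (hb : ∀ (w : U) (v : V), b w v ≤ C₂ * ‖w‖ * ‖v‖)
    -- discrete spaces
    (Uh : Submodule ℝ U) (Vr : Submodule ℝ V)
    [FiniteDimensional ℝ Uh] [FiniteDimensional ℝ Vr]
    -- trial-to-test operator
    (T : U →ₗ[ℝ] V) (hTmem : ∀ w : U, T w ∈ Vr)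
    (hT : ∀ w : U, ∀ v ∈ Vr, ⟪T w, v⟫_ℝ = b w v)
    -- Fortin operator
    (Pi : V →ₗ[ℝ] V) (hPimem : ∀ v : V, Pi v ∈ Vr)
    (hPi : ∀ w ∈ Uh, ∀ v : V, b w (v - Pi v) = 0)
    (hPin : ∀ v : V, ‖Pi v‖ ≤ Cpi * ‖v‖) :
    Set.InjOn T (Uh : Set U) ∧
      Module.finrank ℝ (Submodule.map T Uh) = Module.finrank ℝ Uh :=
  Tr_injective_on_Uh_general b hA1 Uh Vr T hT Pi hPimem hPi
end

section
/- Suppose assumptions (A1) and (A2) hold, the continuity bound b(w,v) ≤ C₂‖w‖_U‖v‖_V holds, and a Fortin operator Π with constant C_Π > 0 exists. Then for every continuous linear functional l : V → ℝ, the practical DPG discrete problem has a unique solution: there exists exactly one u ∈ U_h such that b(u, v) = l(v) for all v ∈ V_hʳ. -/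
open scoped InnerProductSpace

/-
Through the Fortin operator, `b w` vanishes on all of `V` once it vanishes on `Vʳ`, so by (A1)
the trial-to-test operator `T` is injective on `U_h`; it therefore maps `U_h` bijectively onto
`V_hʳ = T(U_h)`. Since `b u v = ⟪T u, v⟫` for `v ∈ V_hʳ ⊆ Vʳ`, the discrete problem asks for the
Riesz representative of `l` in the finite-dimensional space `V_hʳ`, pulled back along this
bijection.
-/

theorem InnerProductSpace.existsUnique_inner_eq {𝕜 E : Type*} [RCLike 𝕜] [NormedAddCommGroup E]
    [InnerProductSpace 𝕜 E] [CompleteSpace E] (l : E →L[𝕜] 𝕜) :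
    ∃! z : E, ∀ v, ⟪z, v⟫_𝕜 = l v := by
  simpa only [ContinuousLinearMap.ext_iff, toDual_apply_apply] using
    (toDual 𝕜 E).bijective.existsUnique l

theorem eq_zero_of_forall_apply_eq_zero_of_fortin {R U V : Type*} [CommRing R] [AddCommGroup U]
    [Module R U] [AddCommGroup V] [Module R V] (b : U →ₗ[R] V →ₗ[R] R)
    (hA1 : ∀ w : U, (∀ v : V, b w v = 0) → w = 0)
    {Uh : Set U} {Vr : Set V} {Pi : V → V}
    (hPimem : ∀ v : V, Pi v ∈ Vr) (hPi : ∀ w ∈ Uh, ∀ v : V, b w (v - Pi v) = 0)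
    {w : U} (hw : w ∈ Uh) (hwVr : ∀ v ∈ Vr, b w v = 0) : w = 0 :=
  hA1 w fun v => by
    rw [← sub_add_cancel v (Pi v), map_add, hPi w hw v, hwVr _ (hPimem v), add_zero]

theorem disjoint_ker_of_fortin {𝕜 U V : Type*} [RCLike 𝕜] [AddCommGroup U] [Module 𝕜 U]
    [NormedAddCommGroup V] [InnerProductSpace 𝕜 V] (b : U →ₗ[𝕜] V →ₗ[𝕜] 𝕜)
    (hA1 : ∀ w : U, (∀ v : V, b w v = 0) → w = 0)
    {Uh : Submodule 𝕜 U} {Vr : Set V} {T : U →ₗ[𝕜] V} (hT : ∀ w : U, ∀ v ∈ Vr, ⟪T w, v⟫_𝕜 = b w v)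
    {Pi : V → V} (hPimem : ∀ v : V, Pi v ∈ Vr) (hPi : ∀ w ∈ Uh, ∀ v : V, b w (v - Pi v) = 0) :
    Disjoint Uh (LinearMap.ker T) :=
  LinearMap.disjoint_ker.mpr fun w hw hTw =>
    eq_zero_of_forall_apply_eq_zero_of_fortin b hA1 hPimem hPi hw fun v hv => by
      rw [← hT w v hv, hTw, inner_zero_left]

theorem practical_dpg_unique_solvability_general
    {U V : Type*} [NormedAddCommGroup U] [InnerProductSpace ℝ U]
    [NormedAddCommGroup V] [InnerProductSpace ℝ V]
    (b : U →ₗ[ℝ] V →ₗ[ℝ] ℝ)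
    -- (A1)
    (hA1 : ∀ w : U, (∀ v : V, b w v = 0) → w = 0)
    -- discrete spaces
    (Uh : Submodule ℝ U) (Vr : Submodule ℝ V)
    [FiniteDimensional ℝ Uh]
    -- trial-to-test operator
    (T : U →ₗ[ℝ] V) (hTmem : ∀ w : U, T w ∈ Vr)
    (hT : ∀ w : U, ∀ v ∈ Vr, ⟪T w, v⟫_ℝ = b w v)
    -- Fortin operator
    (Pi : V →ₗ[ℝ] V) (hPimem : ∀ v : V, Pi v ∈ Vr)
    (hPi : ∀ w ∈ Uh, ∀ v : V, b w (v - Pi v) = 0)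
    (l : V →L[ℝ] ℝ) :
    ∃! u : Uh, ∀ v ∈ Submodule.map T Uh, b (u : U) v = l v := by
  set W := Uh.map T
  have hT_bij : Function.Bijective (T.submoduleMap Uh) :=
    ⟨LinearMap.submoduleMap_injective_of_injOn <| LinearMap.disjoint_ker_iff_injOn.mp <|
      disjoint_ker_of_fortin b hA1 hT hPimem hPi, T.submoduleMap_surjective Uh⟩
  have hb_inner (u : Uh) (v : W) : b u v = ⟪(T.submoduleMap Uh u : W), v⟫_ℝ := by
    obtain ⟨v, w, -, rfl⟩ := v
    exact (hT u (T w) (hTmem w)).symm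
  have hRiesz := InnerProductSpace.existsUnique_inner_eq (l.comp W.subtypeL)
  refine (existsUnique_congr fun u => ?_).mpr (hT_bij.existsUnique_iff.mp hRiesz)
  simp only [Subtype.forall, ← hb_inner]
  rfl

/-- Unique solvability of the practical DPG discrete problem. -/
theorem practical_dpg_unique_solvability
    {U V : Type*} [NormedAddCommGroup U] [InnerProductSpace ℝ U] [CompleteSpace U]
    [NormedAddCommGroup V] [InnerProductSpace ℝ V] [CompleteSpace V]
    (b : U →ₗ[ℝ] V →ₗ[ℝ] ℝ) (C₁ C₂ Cpi : ℝ)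
    (hC₁ : 0 < C₁) (hC₂ : 0 ≤ C₂) (hCpi : 0 < Cpi)
    -- (A1)
    (hA1 : ∀ w : U, (∀ v : V, b w v = 0) → w = 0)
    -- (A2)
    (hA2 : ∀ v : V, C₁ * ‖v‖ ≤ ⨆ w : {w : U // w ≠ 0}, b w.1 v / ‖w.1‖)
    -- continuity bound
    (hb : ∀ (w : U) (v : V), b w v ≤ C₂ * ‖w‖ * ‖v‖)
    -- discrete spaces
    (Uh : Submodule ℝ U) (Vr : Submodule ℝ V)
    [FiniteDimensional ℝ Uh] [FiniteDimensional ℝ Vr]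
    -- trial-to-test operator
    (T : U →ₗ[ℝ] V) (hTmem : ∀ w : U, T w ∈ Vr)
    (hT : ∀ w : U, ∀ v ∈ Vr, ⟪T w, v⟫_ℝ = b w v)
    -- Fortin operator
    (Pi : V →ₗ[ℝ] V) (hPimem : ∀ v : V, Pi v ∈ Vr)
    (hPi : ∀ w ∈ Uh, ∀ v : V, b w (v - Pi v) = 0)
    (hPin : ∀ v : V, ‖Pi v‖ ≤ Cpi * ‖v‖)
    (l : V →L[ℝ] ℝ) :
    ∃! u : Uh, ∀ v ∈ Submodule.map T Uh, b (u : U) v = l v :=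
  practical_dpg_unique_solvability_general b hA1 Uh Vr T hTmem hT Pi hPimem hPi l
end

section
/- Suppose assumptions (A1) and (A2) hold, the continuity bound b(w,v) ≤ C₂‖w‖_U‖v‖_V holds, and a Fortin operator Π with constant C_Π > 0 exists. Let n = dim U_h, let ℬ₁,…,ℬₙ be a basis of U_h, and define the stiffness matrix S ∈ ℝ^{n×n} by S_{ij} = (Tʳℬ_j, Tʳℬ_i)_V. Then S is symmetric and positive definite. -/
open scoped InnerProductSpace

/-!
If `w ∈ U_h` has `Tʳ w = 0`, then `b(w, Πv) = (Tʳ w, Πv)_V = 0` for every `v`, and the Fortin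
property turns this into `b(w, v) = 0` for every `v`, so `w = 0` by (A1). Hence `Tʳ` is injective
on `U_h`, the vectors `Tʳ ℬ_i` are linearly independent, and their Gram matrix `S` is positive
definite.
-/

section Fortin

variable {U V : Type*} [AddCommGroup U] [Module ℝ U]
  [NormedAddCommGroup V] [InnerProductSpace ℝ V]
  {b : U →ₗ[ℝ] V →ₗ[ℝ] ℝ} {Uh : Submodule ℝ U} {Vr : Submodule ℝ V}
  {T : U →ₗ[ℝ] V} {Pi : V →ₗ[ℝ] V}

theorem apply_eq_apply_fortin (hPi : ∀ w ∈ Uh, ∀ v : V, b w (v - Pi v) = 0)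
    {w : U} (hw : w ∈ Uh) (v : V) : b w v = b w (Pi v) := by
  rw [← sub_eq_zero, ← map_sub, hPi w hw v]

theorem eq_zero_of_trialToTest_eq_zero (hA1 : ∀ w : U, (∀ v : V, b w v = 0) → w = 0)
    (hT : ∀ w : U, ∀ v ∈ Vr, ⟪T w, v⟫_ℝ = b w v)
    (hPimem : ∀ v : V, Pi v ∈ Vr) (hPi : ∀ w ∈ Uh, ∀ v : V, b w (v - Pi v) = 0)
    {w : U} (hw : w ∈ Uh) (hTw : T w = 0) : w = 0 :=
  hA1 w fun v => by
    rw [apply_eq_apply_fortin hPi hw, ← hT w _ (hPimem v), hTw, inner_zero_left]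

theorem injective_trialToTest_domRestrict (hA1 : ∀ w : U, (∀ v : V, b w v = 0) → w = 0)
    (hT : ∀ w : U, ∀ v ∈ Vr, ⟪T w, v⟫_ℝ = b w v)
    (hPimem : ∀ v : V, Pi v ∈ Vr) (hPi : ∀ w ∈ Uh, ∀ v : V, b w (v - Pi v) = 0) :
    Function.Injective (T.domRestrict Uh) := by
  refine (injective_iff_map_eq_zero _).2 fun w hTw => Subtype.ext ?_
  exact eq_zero_of_trialToTest_eq_zero hA1 hT hPimem hPi w.2 hTw

end Fortin

theorem dpg_stiffness_posdef_general
    {U V : Type*} [NormedAddCommGroup U] [InnerProductSpace ℝ U]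
    [NormedAddCommGroup V] [InnerProductSpace ℝ V]
    (b : U →ₗ[ℝ] V →ₗ[ℝ] ℝ)
    -- (A1)
    (hA1 : ∀ w : U, (∀ v : V, b w v = 0) → w = 0)
    -- discrete spaces
    (Uh : Submodule ℝ U) (Vr : Submodule ℝ V)
    -- trial-to-test operator
    (T : U →ₗ[ℝ] V)
    (hT : ∀ w : U, ∀ v ∈ Vr, ⟪T w, v⟫_ℝ = b w v)
    -- Fortin operator
    (Pi : V →ₗ[ℝ] V) (hPimem : ∀ v : V, Pi v ∈ Vr)
    (hPi : ∀ w ∈ Uh, ∀ v : V, b w (v - Pi v) = 0)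
    -- basis and stiffness matrix
    (n : ℕ)
    (ℬ : Module.Basis (Fin n) ℝ Uh)
    (S : Matrix (Fin n) (Fin n) ℝ)
    (hS : ∀ i j, S i j = ⟪T (ℬ j : U), T (ℬ i : U)⟫_ℝ) :
    S.IsSymm ∧ S.PosDef := by
  have hS_gram : S = Matrix.gram ℝ (fun i => T (ℬ i : U)) := by
    ext i j
    rw [hS, Matrix.gram_apply, real_inner_comm]
  have hindep : LinearIndependent ℝ (fun i => T (ℬ i : U)) :=
    ℬ.linearIndependent.map' (T.domRestrict Uh)
      (LinearMap.ker_eq_bot.2 (injective_trialToTest_domRestrict hA1 hT hPimem hPi))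
  have hpos : S.PosDef := hS_gram ▸ Matrix.posDef_gram_of_linearIndependent hindep
  exact ⟨hpos.isHermitian, hpos⟩

/-- The DPG stiffness matrix `S_{ij} = (Tʳℬ_j, Tʳℬ_i)_V` is symmetric positive definite. -/
theorem dpg_stiffness_posdef
    {U V : Type*} [NormedAddCommGroup U] [InnerProductSpace ℝ U] [CompleteSpace U]
    [NormedAddCommGroup V] [InnerProductSpace ℝ V] [CompleteSpace V]
    (b : U →ₗ[ℝ] V →ₗ[ℝ] ℝ) (C₁ C₂ Cpi : ℝ)
    (hC₁ : 0 < C₁) (hC₂ : 0 ≤ C₂) (hCpi : 0 < Cpi)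
    -- (A1)
    (hA1 : ∀ w : U, (∀ v : V, b w v = 0) → w = 0)
    -- (A2)
    (hA2 : ∀ v : V, C₁ * ‖v‖ ≤ ⨆ w : {w : U // w ≠ 0}, b w.1 v / ‖w.1‖)
    -- continuity bound
    (hb : ∀ (w : U) (v : V), b w v ≤ C₂ * ‖w‖ * ‖v‖)
    -- discrete spaces
    (Uh : Submodule ℝ U) (Vr : Submodule ℝ V)
    [FiniteDimensional ℝ Uh] [FiniteDimensional ℝ Vr]
    -- trial-to-test operator
    (T : U →ₗ[ℝ] V) (hTmem : ∀ w : U, T w ∈ Vr)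
    (hT : ∀ w : U, ∀ v ∈ Vr, ⟪T w, v⟫_ℝ = b w v)
    -- Fortin operator
    (Pi : V →ₗ[ℝ] V) (hPimem : ∀ v : V, Pi v ∈ Vr)
    (hPi : ∀ w ∈ Uh, ∀ v : V, b w (v - Pi v) = 0)
    (hPin : ∀ v : V, ‖Pi v‖ ≤ Cpi * ‖v‖)
    -- basis and stiffness matrix
    (n : ℕ) (hn : n = Module.finrank ℝ Uh)
    (ℬ : Module.Basis (Fin n) ℝ Uh)
    (S : Matrix (Fin n) (Fin n) ℝ)
    (hS : ∀ i j, S i j = ⟪T (ℬ j : U), T (ℬ i : U)⟫_ℝ) :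
    S.IsSymm ∧ S.PosDef :=
  dpg_stiffness_posdef_general b hA1 Uh Vr T hT Pi hPimem hPi n ℬ S hS
end

section
/- Suppose assumptions (A1) and (A2) hold, the continuity bound b(w,v) ≤ C₂‖w‖_U‖v‖_V holds, and a Fortin operator Π with constant C_Π > 0 exists. Let n = dim U_h, let ℬ₁,…,ℬₙ be a basis of U_h, let S ∈ ℝ^{n×n} be the stiffness matrix S_{ij} = (Tʳℬ_j, Tʳℬ_i)_V, and suppose λ₀, λ₁ > 0 satisfy λ₀‖x‖²_{ℓ²} ≤ ‖Σᵢ xᵢℬᵢ‖²_U ≤ λ₁‖x‖²_{ℓ²} for all x ∈ ℝⁿ. Then the Rayleigh quotient bounds (C₁²λ₀/C_Π²)‖x‖²_{ℓ²} ≤ xᵀSx ≤ C₂²λ₁‖x‖²_{ℓ²} hold for all x ∈ ℝⁿ. -/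
/-!
Represent `b` by the operator `A : V → U` with `⟪A v, u⟫ = b u v` (Riesz). Assumption (A2) says
that `A` is bounded below by `C₁`, and (A1) that its adjoint is injective; hence `A` has closed
dense range, so it is onto. Solving `A v = w` gives a test function with `b w v = ‖w‖²` and
`C₁ ‖v‖ ≤ ‖w‖`; pushing it through the Fortin operator yields the discrete inf-sup bound
`C₁ ‖w‖ ≤ C_Π ‖Tʳ w‖` on `U_h`, while continuity of `b` gives `‖Tʳ w‖ ≤ C₂ ‖w‖`. Since
`xᵀ S x = ‖Tʳ (∑ xᵢ ℬᵢ)‖²`, the norm equivalence of the basis finishes the proof.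
-/

open scoped InnerProductSpace

section BoundedBilinear

variable {U V : Type*}

lemma LinearMap.abs_apply₂_le_of_apply₂_le_s10 [SeminormedAddCommGroup U] [Module ℝ U]
    [SeminormedAddCommGroup V] [Module ℝ V] (b : U →ₗ[ℝ] V →ₗ[ℝ] ℝ) {C : ℝ}
    (hb : ∀ w v, b w v ≤ C * ‖w‖ * ‖v‖) (w : U) (v : V) : |b w v| ≤ C * ‖w‖ * ‖v‖ := by
  have hneg := hb (-w) v
  simp only [map_neg, LinearMap.neg_apply, norm_neg] at hneg
  exact abs_le.mpr ⟨by linarith, hb w v⟩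

variable [NormedAddCommGroup U] [InnerProductSpace ℝ U] [CompleteSpace U]
  [NormedAddCommGroup V] [InnerProductSpace ℝ V]

noncomputable def rieszAdjoint (b : U →ₗ[ℝ] V →ₗ[ℝ] ℝ) (C : ℝ)
    (hb : ∀ w v, b w v ≤ C * ‖w‖ * ‖v‖) : V →L[ℝ] U :=
  (InnerProductSpace.toDual ℝ U).symm.toContinuousLinearEquiv.toContinuousLinearMap.comp
    (b.flip.mkContinuous₂ C fun v w => by
      simpa [mul_right_comm] using b.abs_apply₂_le_of_apply₂_le_s10 hb w v)

@[simp]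
lemma inner_rieszAdjoint_apply (b : U →ₗ[ℝ] V →ₗ[ℝ] ℝ) (C : ℝ)
    (hb : ∀ w v, b w v ≤ C * ‖w‖ * ‖v‖) (v : V) (u : U) :
    ⟪rieszAdjoint b C hb v, u⟫_ℝ = b u v := by
  simp [rieszAdjoint]

end BoundedBilinear

lemma iSup_div_norm_le_of_le {U : Type*} [NormedAddCommGroup U] (f : U → ℝ) {c : ℝ}
    (hc : 0 ≤ c) (hf : ∀ w, f w ≤ c * ‖w‖) : ⨆ w : {w : U // w ≠ 0}, f w.1 / ‖w.1‖ ≤ c :=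
  Real.iSup_le (fun w => (div_le_iff₀ (norm_pos_iff.mpr w.2)).mpr (hf w.1)) hc

lemma ContinuousLinearMap.surjective_of_bound_below_of_injective_adjoint
    {𝕜 E F : Type*} [RCLike 𝕜] [NormedAddCommGroup E] [InnerProductSpace 𝕜 E] [CompleteSpace E]
    [NormedAddCommGroup F] [InnerProductSpace 𝕜 F] [CompleteSpace F] (A : E →L[𝕜] F) {c : ℝ}
    (hc : 0 < c) (hA : ∀ v, c * ‖v‖ ≤ ‖A v‖) (hinj : Function.Injective A.adjoint) :
    Function.Surjective A := by
  have hanti : AntilipschitzWith (Real.toNNReal c⁻¹) A :=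
    A.antilipschitz_of_bound fun v => by
      rw [Real.coe_toNNReal _ (inv_nonneg.mpr hc.le), inv_mul_eq_div, le_div_iff₀ hc, mul_comm]
      exact hA v
  have : CompleteSpace A.range := hanti.completeSpace_range_clm
  rw [← A.coe_coe, ← LinearMap.range_eq_top, ← Submodule.orthogonal_eq_bot_iff,
    A.orthogonal_range, LinearMap.ker_eq_bot]
  exact hinj

section DPG

variable {U V : Type*} [NormedAddCommGroup U] [InnerProductSpace ℝ U]
  [NormedAddCommGroup V] [InnerProductSpace ℝ V] {b : U →ₗ[ℝ] V →ₗ[ℝ] ℝ}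

/-- The transposed inf-sup condition, obtained from (A1) and (A2) by the closed range theorem. -/
lemma exists_apply_eq_norm_sq_of_infSup [CompleteSpace U] [CompleteSpace V] {C₁ C₂ : ℝ}
    (hC₁ : 0 < C₁) (hA1 : ∀ w : U, (∀ v : V, b w v = 0) → w = 0)
    (hA2 : ∀ v : V, C₁ * ‖v‖ ≤ ⨆ w : {w : U // w ≠ 0}, b w.1 v / ‖w.1‖)
    (hb : ∀ w v, b w v ≤ C₂ * ‖w‖ * ‖v‖) (w : U) :
    ∃ v : V, b w v = ‖w‖ ^ 2 ∧ C₁ * ‖v‖ ≤ ‖w‖ := by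
  set A := rieszAdjoint b C₂ hb
  have hbound (v : V) : C₁ * ‖v‖ ≤ ‖A v‖ :=
    (hA2 v).trans <| iSup_div_norm_le_of_le (fun u => b u v) (norm_nonneg (A v)) fun u => by
      rw [← inner_rieszAdjoint_apply b C₂ hb]
      exact real_inner_le_norm _ _
  have hinj : Function.Injective A.adjoint := by
    refine (injective_iff_map_eq_zero _).mpr fun u hu => hA1 u fun v => ?_
    rw [← inner_rieszAdjoint_apply b C₂ hb, ← ContinuousLinearMap.adjoint_inner_right, hu,
      inner_zero_right]
  obtain ⟨v, rfl⟩ := A.surjective_of_bound_below_of_injective_adjoint hC₁ hbound hinj w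
  exact ⟨v, by rw [← inner_rieszAdjoint_apply b C₂ hb, real_inner_self_eq_norm_sq], hbound v⟩

variable {Vr : Submodule ℝ V} {T : U →ₗ[ℝ] V}

lemma norm_trialToTest_le {C₂ : ℝ} (hC₂ : 0 ≤ C₂) (hb : ∀ w v, b w v ≤ C₂ * ‖w‖ * ‖v‖)
    (hTmem : ∀ w, T w ∈ Vr) (hT : ∀ w, ∀ v ∈ Vr, ⟪T w, v⟫_ℝ = b w v) (w : U) :
    ‖T w‖ ≤ C₂ * ‖w‖ := by
  rcases (norm_nonneg (T w)).eq_or_lt with h | h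
  · rw [← h]
    positivity
  refine le_of_mul_le_mul_right ?_ h
  calc ‖T w‖ * ‖T w‖ = b w (T w) := by rw [← hT w _ (hTmem w), real_inner_self_eq_norm_mul_norm]
    _ ≤ C₂ * ‖w‖ * ‖T w‖ := hb w (T w)

/-- Fortin's criterion: the inf-sup condition on `U × V` descends to `U_h × Vʳ`. -/
lemma mul_norm_le_mul_norm_trialToTest {Uh : Submodule ℝ U} {Pi : V →ₗ[ℝ] V} {C₁ Cpi : ℝ}
    (hC₁ : 0 ≤ C₁) (hCpi : 0 ≤ Cpi) (hinfSup : ∀ w, ∃ v, b w v = ‖w‖ ^ 2 ∧ C₁ * ‖v‖ ≤ ‖w‖)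
    (hT : ∀ w, ∀ v ∈ Vr, ⟪T w, v⟫_ℝ = b w v) (hPimem : ∀ v, Pi v ∈ Vr)
    (hPi : ∀ w ∈ Uh, ∀ v, b w (v - Pi v) = 0) (hPin : ∀ v, ‖Pi v‖ ≤ Cpi * ‖v‖)
    {w : U} (hw : w ∈ Uh) : C₁ * ‖w‖ ≤ Cpi * ‖T w‖ := by
  rcases (norm_nonneg w).eq_or_lt with h | h
  · rw [← h, mul_zero]
    positivity
  obtain ⟨v, hv, hCv⟩ := hinfSup w
  have hfortin : b w (Pi v) = b w v := by
    rw [eq_comm, ← sub_eq_zero, ← map_sub, hPi w hw v]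
  refine le_of_mul_le_mul_right ?_ h
  calc C₁ * ‖w‖ * ‖w‖ = C₁ * ⟪T w, Pi v⟫_ℝ := by
        rw [hT w _ (hPimem v), hfortin, hv, sq, mul_assoc]
    _ ≤ C₁ * (‖T w‖ * (Cpi * ‖v‖)) := by
        gcongr
        exact (real_inner_le_norm _ _).trans (by gcongr; exact hPin v)
    _ = Cpi * ‖T w‖ * (C₁ * ‖v‖) := by ring
    _ ≤ Cpi * ‖T w‖ * ‖w‖ := by gcongr

end DPG

lemma sum_sum_mul_inner_mul_eq_norm_sq {ι E : Type*} [Fintype ι] [NormedAddCommGroup E]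
    [InnerProductSpace ℝ E] (f : ι → E) (x : ι → ℝ) :
    ∑ i, ∑ j, x i * ⟪f j, f i⟫_ℝ * x j = ‖∑ i, x i • f i‖ ^ 2 := by
  rw [← real_inner_self_eq_norm_sq, sum_inner]
  refine Finset.sum_congr rfl fun i _ => ?_
  rw [real_inner_smul_left, inner_sum, Finset.mul_sum]
  refine Finset.sum_congr rfl fun j _ => ?_
  rw [real_inner_smul_right, real_inner_comm]
  ring

theorem dpg_stiffness_rayleigh_bounds_general
    {U V : Type*} [NormedAddCommGroup U] [InnerProductSpace ℝ U] [CompleteSpace U]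
    [NormedAddCommGroup V] [InnerProductSpace ℝ V] [CompleteSpace V]
    (b : U →ₗ[ℝ] V →ₗ[ℝ] ℝ) (C₁ C₂ Cpi : ℝ)
    (hC₁ : 0 < C₁) (hC₂ : 0 ≤ C₂) (hCpi : 0 < Cpi)
    -- (A1)
    (hA1 : ∀ w : U, (∀ v : V, b w v = 0) → w = 0)
    -- (A2)
    (hA2 : ∀ v : V, C₁ * ‖v‖ ≤ ⨆ w : {w : U // w ≠ 0}, b w.1 v / ‖w.1‖)
    -- continuity bound
    (hb : ∀ (w : U) (v : V), b w v ≤ C₂ * ‖w‖ * ‖v‖)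
    -- discrete spaces
    (Uh : Submodule ℝ U) (Vr : Submodule ℝ V)
    -- trial-to-test operator
    (T : U →ₗ[ℝ] V) (hTmem : ∀ w : U, T w ∈ Vr)
    (hT : ∀ w : U, ∀ v ∈ Vr, ⟪T w, v⟫_ℝ = b w v)
    -- Fortin operator
    (Pi : V →ₗ[ℝ] V) (hPimem : ∀ v : V, Pi v ∈ Vr)
    (hPi : ∀ w ∈ Uh, ∀ v : V, b w (v - Pi v) = 0)
    (hPin : ∀ v : V, ‖Pi v‖ ≤ Cpi * ‖v‖)
    -- basis and stiffness matrix
    (n : ℕ)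
    (ℬ : Module.Basis (Fin n) ℝ Uh)
    (S : Matrix (Fin n) (Fin n) ℝ)
    (hS : ∀ i j, S i j = ⟪T (ℬ j : U), T (ℬ i : U)⟫_ℝ)
    -- the ℓ² norm equivalence constants
    (lam₀ lam₁ : ℝ)
    (hlam : ∀ x : EuclideanSpace ℝ (Fin n),
      lam₀ * ‖x‖ ^ 2 ≤ ‖∑ i, x i • (ℬ i : U)‖ ^ 2 ∧
      ‖∑ i, x i • (ℬ i : U)‖ ^ 2 ≤ lam₁ * ‖x‖ ^ 2) :
    ∀ x : EuclideanSpace ℝ (Fin n),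
      C₁ ^ 2 * lam₀ / Cpi ^ 2 * ‖x‖ ^ 2 ≤ ∑ i, ∑ j, x i * S i j * x j ∧
      ∑ i, ∑ j, x i * S i j * x j ≤ C₂ ^ 2 * lam₁ * ‖x‖ ^ 2 := by
  intro x
  set w : U := ∑ i, x i • (ℬ i : U)
  have hw : w ∈ Uh := Uh.sum_mem fun i _ => Uh.smul_mem _ (ℬ i).2
  have hquad : ∑ i, ∑ j, x i * S i j * x j = ‖T w‖ ^ 2 := by
    simp only [hS, sum_sum_mul_inner_mul_eq_norm_sq, w, map_sum, map_smul]
  have hlow : C₁ * ‖w‖ ≤ Cpi * ‖T w‖ :=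
    mul_norm_le_mul_norm_trialToTest hC₁.le hCpi.le
      (exists_apply_eq_norm_sq_of_infSup hC₁ hA1 hA2 hb) hT hPimem hPi hPin hw
  have hupp : ‖T w‖ ≤ C₂ * ‖w‖ := norm_trialToTest_le hC₂ hb hTmem hT w
  obtain ⟨hlam₀x, hlam₁x⟩ := hlam x
  rw [hquad]
  constructor
  · calc C₁ ^ 2 * lam₀ / Cpi ^ 2 * ‖x‖ ^ 2 ≤ C₁ ^ 2 / Cpi ^ 2 * ‖w‖ ^ 2 := by
          rw [mul_div_right_comm, mul_assoc]
          gcongr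
      _ ≤ ‖T w‖ ^ 2 := by
          rw [div_mul_eq_mul_div, div_le_iff₀ (by positivity), ← mul_pow, ← mul_pow, mul_comm _ Cpi]
          exact pow_le_pow_left₀ (by positivity) hlow 2
  · calc ‖T w‖ ^ 2 ≤ C₂ ^ 2 * ‖w‖ ^ 2 := by
          rw [← mul_pow]
          exact pow_le_pow_left₀ (norm_nonneg _) hupp 2
      _ ≤ C₂ ^ 2 * lam₁ * ‖x‖ ^ 2 := by
          rw [mul_assoc]
          gcongr

/-- Rayleigh-quotient bounds for the DPG stiffness matrix:
`(C₁²λ₀/C_Π²)‖x‖² ≤ xᵀSx ≤ C₂²λ₁‖x‖²`. -/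
theorem dpg_stiffness_rayleigh_bounds
    {U V : Type*} [NormedAddCommGroup U] [InnerProductSpace ℝ U] [CompleteSpace U]
    [NormedAddCommGroup V] [InnerProductSpace ℝ V] [CompleteSpace V]
    (b : U →ₗ[ℝ] V →ₗ[ℝ] ℝ) (C₁ C₂ Cpi : ℝ)
    (hC₁ : 0 < C₁) (hC₂ : 0 ≤ C₂) (hCpi : 0 < Cpi)
    -- (A1)
    (hA1 : ∀ w : U, (∀ v : V, b w v = 0) → w = 0)
    -- (A2)
    (hA2 : ∀ v : V, C₁ * ‖v‖ ≤ ⨆ w : {w : U // w ≠ 0}, b w.1 v / ‖w.1‖)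
    -- continuity bound
    (hb : ∀ (w : U) (v : V), b w v ≤ C₂ * ‖w‖ * ‖v‖)
    -- discrete spaces
    (Uh : Submodule ℝ U) (Vr : Submodule ℝ V)
    [FiniteDimensional ℝ Uh] [FiniteDimensional ℝ Vr]
    -- trial-to-test operator
    (T : U →ₗ[ℝ] V) (hTmem : ∀ w : U, T w ∈ Vr)
    (hT : ∀ w : U, ∀ v ∈ Vr, ⟪T w, v⟫_ℝ = b w v)
    -- Fortin operator
    (Pi : V →ₗ[ℝ] V) (hPimem : ∀ v : V, Pi v ∈ Vr)
    (hPi : ∀ w ∈ Uh, ∀ v : V, b w (v - Pi v) = 0)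
    (hPin : ∀ v : V, ‖Pi v‖ ≤ Cpi * ‖v‖)
    -- basis and stiffness matrix
    (n : ℕ) (hn : n = Module.finrank ℝ Uh)
    (ℬ : Module.Basis (Fin n) ℝ Uh)
    (S : Matrix (Fin n) (Fin n) ℝ)
    (hS : ∀ i j, S i j = ⟪T (ℬ j : U), T (ℬ i : U)⟫_ℝ)
    -- the ℓ² norm equivalence constants
    (lam₀ lam₁ : ℝ) (hlam₀ : 0 < lam₀) (hlam₁ : 0 < lam₁)
    (hlam : ∀ x : EuclideanSpace ℝ (Fin n),
      lam₀ * ‖x‖ ^ 2 ≤ ‖∑ i, x i • (ℬ i : U)‖ ^ 2 ∧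
      ‖∑ i, x i • (ℬ i : U)‖ ^ 2 ≤ lam₁ * ‖x‖ ^ 2) :
    ∀ x : EuclideanSpace ℝ (Fin n),
      C₁ ^ 2 * lam₀ / Cpi ^ 2 * ‖x‖ ^ 2 ≤ ∑ i, ∑ j, x i * S i j * x j ∧
      ∑ i, ∑ j, x i * S i j * x j ≤ C₂ ^ 2 * lam₁ * ‖x‖ ^ 2 :=
  dpg_stiffness_rayleigh_bounds_general b C₁ C₂ Cpi hC₁ hC₂ hCpi hA1 hA2 hb Uh Vr T hTmem hT Pi
    hPimem hPi hPin n ℬ S hS lam₀ lam₁ hlam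
end

section
/- Suppose assumptions (A1) and (A2) hold, the continuity bound b(w,v) ≤ C₂‖w‖_U‖v‖_V holds, and a Fortin operator Π with constant C_Π > 0 exists. Let n = dim U_h, let ℬ₁,…,ℬₙ be a basis of U_h, let S ∈ ℝ^{n×n} be the stiffness matrix S_{ij} = (Tʳℬ_j, Tʳℬ_i)_V, and suppose λ₀, λ₁ > 0 satisfy λ₀‖x‖²_{ℓ²} ≤ ‖Σᵢ xᵢℬᵢ‖²_U ≤ λ₁‖x‖²_{ℓ²} for all x ∈ ℝⁿ. Then every eigenvalue μ of the symmetric matrix S satisfies C₁²λ₀/C_Π² ≤ μ ≤ C₂²λ₁; consequently the spectral condition number κ(S), i.e. the ratio of the largest to the smallest eigenvalue of S, satisfies κ(S) ≤ (λ₁/λ₀)·(C₂²C_Π²/C₁²). -/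
/-!
(A1) and (A2) make the Riesz representative `A : V → U` of `b`, `⟪A v, w⟫ = b w v`, bounded below
with dense range, hence surjective: every `w` is `A v` with `C₁ ‖v‖ ≤ ‖w‖` and `b w v = ‖w‖²`.
For `w ∈ U_h` the Fortin operator replaces `v` by `Π v ∈ Vʳ`, where `b w (Π v) = ⟪Tʳ w, Π v⟫`,
so `‖Tʳ w‖ ≥ (C₁ / C_Π) ‖w‖`; continuity of `b` gives `‖Tʳ w‖ ≤ C₂ ‖w‖`. As `S` is the Gram
matrix of the `Tʳ ℬᵢ`, `xᵀ S x = ‖Tʳ (∑ xᵢ ℬᵢ)‖²`, which squeezes the Rayleigh quotients of `S`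
between `C₁² λ₀ / C_Π²` and `C₂² λ₁`.
-/

open scoped InnerProductSpace
open Matrix

theorem ContinuousLinearMap.surjective_of_bounded_below {𝕜 E F : Type*} [RCLike 𝕜]
    [NormedAddCommGroup E] [InnerProductSpace 𝕜 E] [CompleteSpace E]
    [NormedAddCommGroup F] [InnerProductSpace 𝕜 F]
    (A : E →L[𝕜] F) {c : ℝ} (hc : 0 < c) (hA : ∀ x, c * ‖x‖ ≤ ‖A x‖)
    (hdense : ∀ y, (∀ x, ⟪A x, y⟫_𝕜 = 0) → y = 0) :
    Function.Surjective A := by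
  have hanti : AntilipschitzWith (Real.toNNReal c⁻¹) A := A.antilipschitz_of_bound fun x => by
    rw [Real.coe_toNNReal _ (inv_nonneg.2 hc.le), ← div_eq_inv_mul, le_div_iff₀' hc]
    exact hA x
  have hcomplete : IsComplete (LinearMap.range (A : E →ₗ[𝕜] F) : Set F) := by
    rw [LinearMap.coe_range]
    exact (hanti.isUniformEmbedding A.uniformContinuous).isUniformInducing.isComplete_range
  have := hcomplete.completeSpace_coe
  have horth : (LinearMap.range (A : E →ₗ[𝕜] F))ᗮ = ⊥ :=
    (Submodule.eq_bot_iff _).2 fun y hy => hdense y fun x => hy (A x) ⟨x, rfl⟩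
  exact LinearMap.range_eq_top.1 (Submodule.orthogonal_eq_bot_iff.1 horth)

theorem EuclideanSpace.norm_toLp_sq {ι : Type*} [Fintype ι] (x : ι → ℝ) :
    ‖WithLp.toLp 2 x‖ ^ 2 = x ⬝ᵥ x := by
  rw [EuclideanSpace.norm_sq_eq]
  simp [dotProduct, sq]

theorem Matrix.gram_eigenvalue_mem_Icc {ι E : Type*} [Fintype ι] [NormedAddCommGroup E]
    [InnerProductSpace ℝ E] (e : ι → E) {a c : ℝ}
    (he : ∀ x : EuclideanSpace ℝ ι,
      a * ‖x‖ ^ 2 ≤ ‖∑ i, x i • e i‖ ^ 2 ∧ ‖∑ i, x i • e i‖ ^ 2 ≤ c * ‖x‖ ^ 2)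
    {μ : ℝ} {x : ι → ℝ} (hx : x ≠ 0) (hμ : gram ℝ e *ᵥ x = μ • x) : a ≤ μ ∧ μ ≤ c := by
  have hq : ‖∑ i, x i • e i‖ ^ 2 = μ * ‖WithLp.toLp 2 x‖ ^ 2 := by
    have hgram := star_dotProduct_gram_mulVec (𝕜 := ℝ) e x x
    rw [star_trivial, hμ] at hgram
    rw [← real_inner_self_eq_norm_sq, ← hgram, EuclideanSpace.norm_toLp_sq, dotProduct_smul,
      smul_eq_mul]
  have hpos : 0 < ‖WithLp.toLp 2 x‖ ^ 2 := by
    have : WithLp.toLp 2 x ≠ 0 := by simpa using hx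
    positivity
  obtain ⟨h₀, h₁⟩ := he (WithLp.toLp 2 x)
  rw [hq] at h₀ h₁
  exact ⟨le_of_mul_le_mul_right h₀ hpos, le_of_mul_le_mul_right h₁ hpos⟩

section InfSup

variable {U V : Type*} [NormedAddCommGroup U] [InnerProductSpace ℝ U]
  [NormedAddCommGroup V] [InnerProductSpace ℝ V] (b : U →ₗ[ℝ] V →ₗ[ℝ] ℝ) {C₁ C₂ : ℝ}

theorem exists_continuousLinearMap_inner_eq [CompleteSpace U]
    (hb : ∀ (w : U) (v : V), b w v ≤ C₂ * ‖w‖ * ‖v‖) :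
    ∃ A : V →L[ℝ] U, ∀ v w, ⟪A v, w⟫_ℝ = b w v := by
  have hbound : ∀ v w, ‖b.flip v w‖ ≤ C₂ * ‖v‖ * ‖w‖ := by
    intro v w
    have hneg := hb (-w) v
    simp only [map_neg, LinearMap.neg_apply, norm_neg] at hneg
    rw [Real.norm_eq_abs, abs_le, LinearMap.flip_apply]
    constructor <;> linarith [hb w v]
  let B := b.flip.mkContinuous₂ C₂ hbound
  let R := (InnerProductSpace.toDual ℝ U).symm
  refine ⟨{ toFun := fun v => R (B v)
            map_add' := by simp
            map_smul' := by simp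
            cont := R.continuous.comp B.continuous }, fun v w => ?_⟩
  simp [R, B]

theorem exists_norm_sq_eq_of_infSup [CompleteSpace U] [CompleteSpace V] (hC₁ : 0 < C₁)
    (hA1 : ∀ w : U, (∀ v : V, b w v = 0) → w = 0)
    (hA2 : ∀ v : V, C₁ * ‖v‖ ≤ ⨆ w : {w : U // w ≠ 0}, b w.1 v / ‖w.1‖)
    (hb : ∀ (w : U) (v : V), b w v ≤ C₂ * ‖w‖ * ‖v‖) (w : U) :
    ∃ v : V, b w v = ‖w‖ ^ 2 ∧ C₁ * ‖v‖ ≤ ‖w‖ := by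
  obtain ⟨A, hA⟩ := exists_continuousLinearMap_inner_eq b hb
  have hbelow : ∀ v, C₁ * ‖v‖ ≤ ‖A v‖ := fun v =>
    (hA2 v).trans <| Real.iSup_le (fun w => by
      rw [div_le_iff₀ (norm_pos_iff.2 w.2), ← hA]
      exact real_inner_le_norm _ _) (norm_nonneg _)
  obtain ⟨v, rfl⟩ :=
    A.surjective_of_bounded_below hC₁ hbelow (fun w hw => hA1 w fun v => hA v w ▸ hw v) w
  exact ⟨v, by rw [← hA, real_inner_self_eq_norm_sq], hbelow v⟩

end InfSup

section TrialToTest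

variable {U V : Type*} [NormedAddCommGroup U] [InnerProductSpace ℝ U]
  [NormedAddCommGroup V] [InnerProductSpace ℝ V] {b : U →ₗ[ℝ] V →ₗ[ℝ] ℝ}
  {Vr : Submodule ℝ V} {T : U →ₗ[ℝ] V}

theorem norm_le_of_inner_eq {C₂ : ℝ} (hC₂ : 0 ≤ C₂) (hTmem : ∀ w : U, T w ∈ Vr)
    (hT : ∀ w : U, ∀ v ∈ Vr, ⟪T w, v⟫_ℝ = b w v)
    (hb : ∀ (w : U) (v : V), b w v ≤ C₂ * ‖w‖ * ‖v‖) (w : U) : ‖T w‖ ≤ C₂ * ‖w‖ := by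
  have h : ‖T w‖ * ‖T w‖ ≤ C₂ * ‖w‖ * ‖T w‖ := by
    rw [← real_inner_self_eq_norm_mul_norm, hT w _ (hTmem w)]
    exact hb w (T w)
  rcases (norm_nonneg (T w)).eq_or_lt with h0 | hpos
  · rw [← h0]
    positivity
  · exact le_of_mul_le_mul_right h hpos

theorem div_mul_norm_le_of_fortin {Uh : Submodule ℝ U} {C₁ Cpi : ℝ}
    (hC₁ : 0 ≤ C₁) (hCpi : 0 < Cpi)
    (hinfSup : ∀ w : U, ∃ v : V, b w v = ‖w‖ ^ 2 ∧ C₁ * ‖v‖ ≤ ‖w‖)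
    (hT : ∀ w : U, ∀ v ∈ Vr, ⟪T w, v⟫_ℝ = b w v) (Pi : V →ₗ[ℝ] V) (hPimem : ∀ v : V, Pi v ∈ Vr)
    (hPi : ∀ w ∈ Uh, ∀ v : V, b w (v - Pi v) = 0)
    (hPin : ∀ v : V, ‖Pi v‖ ≤ Cpi * ‖v‖) {w : U} (hw : w ∈ Uh) :
    C₁ / Cpi * ‖w‖ ≤ ‖T w‖ := by
  obtain ⟨v, hbv, hv⟩ := hinfSup w
  have hsq : ‖w‖ ^ 2 ≤ ‖T w‖ * (Cpi * ‖v‖) := calc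
    ‖w‖ ^ 2 = b w (Pi v) := by rw [← hbv, ← sub_eq_zero, ← map_sub, hPi w hw v]
    _ = ⟪T w, Pi v⟫_ℝ := (hT w _ (hPimem v)).symm
    _ ≤ ‖T w‖ * ‖Pi v‖ := real_inner_le_norm _ _
    _ ≤ ‖T w‖ * (Cpi * ‖v‖) := by gcongr; exact hPin v
  rw [div_mul_eq_mul_div, div_le_iff₀' hCpi]
  rcases (norm_nonneg w).eq_or_lt with h0 | hpos
  · rw [← h0, mul_zero]
    positivity
  refine le_of_mul_le_mul_left ?_ hpos
  calc ‖w‖ * (C₁ * ‖w‖) = C₁ * ‖w‖ ^ 2 := by ring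
    _ ≤ C₁ * (‖T w‖ * (Cpi * ‖v‖)) := by gcongr
    _ = Cpi * ‖T w‖ * (C₁ * ‖v‖) := by ring
    _ ≤ Cpi * ‖T w‖ * ‖w‖ := by gcongr
    _ = ‖w‖ * (Cpi * ‖T w‖) := by ring

end TrialToTest

theorem dpg_stiffness_condition_number_general
    {U V : Type*} [NormedAddCommGroup U] [InnerProductSpace ℝ U] [CompleteSpace U]
    [NormedAddCommGroup V] [InnerProductSpace ℝ V] [CompleteSpace V]
    (b : U →ₗ[ℝ] V →ₗ[ℝ] ℝ) (C₁ C₂ Cpi : ℝ)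
    (hC₁ : 0 < C₁) (hC₂ : 0 ≤ C₂) (hCpi : 0 < Cpi)
    -- (A1)
    (hA1 : ∀ w : U, (∀ v : V, b w v = 0) → w = 0)
    -- (A2)
    (hA2 : ∀ v : V, C₁ * ‖v‖ ≤ ⨆ w : {w : U // w ≠ 0}, b w.1 v / ‖w.1‖)
    -- continuity bound
    (hb : ∀ (w : U) (v : V), b w v ≤ C₂ * ‖w‖ * ‖v‖)
    -- discrete spaces
    (Uh : Submodule ℝ U) (Vr : Submodule ℝ V)
    -- trial-to-test operator
    (T : U →ₗ[ℝ] V) (hTmem : ∀ w : U, T w ∈ Vr)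
    (hT : ∀ w : U, ∀ v ∈ Vr, ⟪T w, v⟫_ℝ = b w v)
    -- Fortin operator
    (Pi : V →ₗ[ℝ] V) (hPimem : ∀ v : V, Pi v ∈ Vr)
    (hPi : ∀ w ∈ Uh, ∀ v : V, b w (v - Pi v) = 0)
    (hPin : ∀ v : V, ‖Pi v‖ ≤ Cpi * ‖v‖)
    -- basis and stiffness matrix
    (n : ℕ)
    (ℬ : Module.Basis (Fin n) ℝ Uh)
    (S : Matrix (Fin n) (Fin n) ℝ)
    (hS : ∀ i j, S i j = ⟪T (ℬ j : U), T (ℬ i : U)⟫_ℝ)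
    -- the ℓ² norm equivalence constants
    (lam₀ lam₁ : ℝ) (hlam₀ : 0 < lam₀) (hlam₁ : 0 < lam₁)
    (hlam : ∀ x : EuclideanSpace ℝ (Fin n),
      lam₀ * ‖x‖ ^ 2 ≤ ‖∑ i, x i • (ℬ i : U)‖ ^ 2 ∧
      ‖∑ i, x i • (ℬ i : U)‖ ^ 2 ≤ lam₁ * ‖x‖ ^ 2) :
    (∀ (μ : ℝ) (x : Fin n → ℝ), x ≠ 0 → S.mulVec x = μ • x →
        C₁ ^ 2 * lam₀ / Cpi ^ 2 ≤ μ ∧ μ ≤ C₂ ^ 2 * lam₁) ∧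
    ∀ (μ₁ μ₂ : ℝ) (x₁ x₂ : Fin n → ℝ), x₁ ≠ 0 → x₂ ≠ 0 →
        S.mulVec x₁ = μ₁ • x₁ → S.mulVec x₂ = μ₂ • x₂ →
        μ₁ / μ₂ ≤ lam₁ / lam₀ * (C₂ ^ 2 * Cpi ^ 2 / C₁ ^ 2) := by
  have hgram : S = gram ℝ fun i => T (ℬ i) :=
    Matrix.ext fun i j => by rw [hS, gram_apply, real_inner_comm]
  have hbounds (x : EuclideanSpace ℝ (Fin n)) :
      C₁ ^ 2 * lam₀ / Cpi ^ 2 * ‖x‖ ^ 2 ≤ ‖∑ i, x i • T (ℬ i)‖ ^ 2 ∧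
      ‖∑ i, x i • T (ℬ i)‖ ^ 2 ≤ C₂ ^ 2 * lam₁ * ‖x‖ ^ 2 := by
    set w := ∑ i, x i • (ℬ i : U)
    have hw : w ∈ Uh := Uh.sum_mem fun i _ => Uh.smul_mem _ (ℬ i).2
    have hTw : ∑ i, x i • T (ℬ i) = T w := by simp [w, map_sum]
    have hlow := div_mul_norm_le_of_fortin hC₁.le hCpi
      (exists_norm_sq_eq_of_infSup b hC₁ hA1 hA2 hb) hT Pi hPimem hPi hPin hw
    have hup := norm_le_of_inner_eq hC₂ hTmem hT hb w
    obtain ⟨hlam₀x, hlam₁x⟩ := hlam x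
    rw [hTw]
    constructor
    · calc C₁ ^ 2 * lam₀ / Cpi ^ 2 * ‖x‖ ^ 2 = (C₁ / Cpi) ^ 2 * (lam₀ * ‖x‖ ^ 2) := by ring
        _ ≤ (C₁ / Cpi * ‖w‖) ^ 2 := by rw [mul_pow]; gcongr
        _ ≤ ‖T w‖ ^ 2 := by gcongr
    · calc ‖T w‖ ^ 2 ≤ (C₂ * ‖w‖) ^ 2 := by gcongr
        _ ≤ C₂ ^ 2 * lam₁ * ‖x‖ ^ 2 := by rw [mul_pow, mul_assoc]; gcongr
  have heigen (μ : ℝ) (x : Fin n → ℝ) (hx : x ≠ 0) (hμ : S.mulVec x = μ • x) :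
      C₁ ^ 2 * lam₀ / Cpi ^ 2 ≤ μ ∧ μ ≤ C₂ ^ 2 * lam₁ :=
    gram_eigenvalue_mem_Icc _ hbounds hx (hgram ▸ hμ)
  refine ⟨heigen, fun μ₁ μ₂ x₁ x₂ hx₁ hx₂ hμ₁ hμ₂ => ?_⟩
  calc μ₁ / μ₂ ≤ C₂ ^ 2 * lam₁ / (C₁ ^ 2 * lam₀ / Cpi ^ 2) :=
        div_le_div₀ (by positivity) (heigen μ₁ x₁ hx₁ hμ₁).2 (by positivity)
          (heigen μ₂ x₂ hx₂ hμ₂).1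
    _ = lam₁ / lam₀ * (C₂ ^ 2 * Cpi ^ 2 / C₁ ^ 2) := by field_simp

/-- Eigenvalue bounds and condition number bound for the DPG stiffness matrix:
every eigenvalue `μ` of `S` satisfies `C₁²λ₀/C_Π² ≤ μ ≤ C₂²λ₁`, and hence the ratio of any
two eigenvalues (in particular the spectral condition number `κ(S)`, the ratio of the largest
to the smallest eigenvalue) is at most `(λ₁/λ₀)·(C₂²C_Π²/C₁²)`. -/
theorem dpg_stiffness_condition_number
    {U V : Type*} [NormedAddCommGroup U] [InnerProductSpace ℝ U] [CompleteSpace U]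
    [NormedAddCommGroup V] [InnerProductSpace ℝ V] [CompleteSpace V]
    (b : U →ₗ[ℝ] V →ₗ[ℝ] ℝ) (C₁ C₂ Cpi : ℝ)
    (hC₁ : 0 < C₁) (hC₂ : 0 ≤ C₂) (hCpi : 0 < Cpi)
    -- (A1)
    (hA1 : ∀ w : U, (∀ v : V, b w v = 0) → w = 0)
    -- (A2)
    (hA2 : ∀ v : V, C₁ * ‖v‖ ≤ ⨆ w : {w : U // w ≠ 0}, b w.1 v / ‖w.1‖)
    -- continuity bound
    (hb : ∀ (w : U) (v : V), b w v ≤ C₂ * ‖w‖ * ‖v‖)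
    -- discrete spaces
    (Uh : Submodule ℝ U) (Vr : Submodule ℝ V)
    [FiniteDimensional ℝ Uh] [FiniteDimensional ℝ Vr]
    -- trial-to-test operator
    (T : U →ₗ[ℝ] V) (hTmem : ∀ w : U, T w ∈ Vr)
    (hT : ∀ w : U, ∀ v ∈ Vr, ⟪T w, v⟫_ℝ = b w v)
    -- Fortin operator
    (Pi : V →ₗ[ℝ] V) (hPimem : ∀ v : V, Pi v ∈ Vr)
    (hPi : ∀ w ∈ Uh, ∀ v : V, b w (v - Pi v) = 0)
    (hPin : ∀ v : V, ‖Pi v‖ ≤ Cpi * ‖v‖)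
    -- basis and stiffness matrix
    (n : ℕ) (hn : n = Module.finrank ℝ Uh)
    (ℬ : Module.Basis (Fin n) ℝ Uh)
    (S : Matrix (Fin n) (Fin n) ℝ)
    (hS : ∀ i j, S i j = ⟪T (ℬ j : U), T (ℬ i : U)⟫_ℝ)
    -- the ℓ² norm equivalence constants
    (lam₀ lam₁ : ℝ) (hlam₀ : 0 < lam₀) (hlam₁ : 0 < lam₁)
    (hlam : ∀ x : EuclideanSpace ℝ (Fin n),
      lam₀ * ‖x‖ ^ 2 ≤ ‖∑ i, x i • (ℬ i : U)‖ ^ 2 ∧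
      ‖∑ i, x i • (ℬ i : U)‖ ^ 2 ≤ lam₁ * ‖x‖ ^ 2) :
    (∀ (μ : ℝ) (x : Fin n → ℝ), x ≠ 0 → S.mulVec x = μ • x →
        C₁ ^ 2 * lam₀ / Cpi ^ 2 ≤ μ ∧ μ ≤ C₂ ^ 2 * lam₁) ∧
    ∀ (μ₁ μ₂ : ℝ) (x₁ x₂ : Fin n → ℝ), x₁ ≠ 0 → x₂ ≠ 0 →
        S.mulVec x₁ = μ₁ • x₁ → S.mulVec x₂ = μ₂ • x₂ →
        μ₁ / μ₂ ≤ lam₁ / lam₀ * (C₂ ^ 2 * Cpi ^ 2 / C₁ ^ 2) :=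
  dpg_stiffness_condition_number_general b C₁ C₂ Cpi hC₁ hC₂ hCpi hA1 hA2 hb Uh Vr T hTmem hT Pi
    hPimem hPi hPin n ℬ S hS lam₀ lam₁ hlam₀ hlam₁ hlam
end

section
/- Let N ≥ 1 and let r ≥ 0 be integers. If f : ℝᴺ → ℝ is a polynomial function of total degree at most r that vanishes at every point of each facet F₀,…,F_N of the simplex K, then there exists a polynomial function g of total degree at most r − (N+1) (truncated subtraction in ℕ; in particular, if r < N+1 then necessarily f = 0 and g = 0) such that f = (λ₀·λ₁·⋯·λ_N)·g. -/
/-!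
Each barycentric coordinate `λᵢ` is given by a polynomial `Λᵢ` of total degree one. For
`v = aᵢ - aⱼ` with `j ≠ i`, the substitution `x ↦ x - λᵢ(x) v` is the identity modulo `Λᵢ`,
so `P` is congruent mod `Λᵢ` to `x ↦ P(x - λᵢ(x) v)`. The latter vanishes on the
whole simplex, because this map sends `K` into the facet `Fᵢ`; as `K` has nonempty interior it is
the zero polynomial, hence `Λᵢ ∣ P`. The `Λᵢ` are irreducible and pairwise non-associated, so
their product divides `P`, and comparing total degrees gives the bound on the quotient.
-/

open MvPolynomial

namespace MvPolynomial

variable {σ R : Type*}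

theorem dvd_sub_bind₁_of_forall_dvd_X_sub [CommRing R] {p : MvPolynomial σ R}
    {g : σ → MvPolynomial σ R}
    (hg : ∀ i, p ∣ X i - g i) (q : MvPolynomial σ R) : p ∣ q - bind₁ g q := by
  rw [← Ideal.mem_span_singleton, ← Ideal.Quotient.eq]
  suffices (Ideal.Quotient.mkₐ R (Ideal.span {p})).comp (bind₁ g) = Ideal.Quotient.mkₐ R _ from
    (DFunLike.congr_fun this q).symm
  ext i
  simpa [Ideal.Quotient.eq, Ideal.mem_span_singleton] using dvd_sub_comm.1 (hg i)

theorem totalDegree_finsetProd_of_isDomain [CommRing R] [IsDomain R] {ι : Type*} (s : Finset ι)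
    {p : ι → MvPolynomial σ R} (hp : ∀ i ∈ s, p i ≠ 0) :
    (∏ i ∈ s, p i).totalDegree = ∑ i ∈ s, (p i).totalDegree := by
  cases exists_wellFoundedGT σ
  simp [← degree_degLexDegree, MonomialOrder.degree_prod hp, map_sum]

theorem totalDegree_ne_zero_of_eval_ne [CommRing R] {p : MvPolynomial σ R} {x y : σ → R}
    (h : eval x p ≠ eval y p) : p.totalDegree ≠ 0 := fun h₀ => h <| by
  rw [totalDegree_eq_zero_iff_eq_C.1 h₀, eval_C, eval_C]

theorem irreducible_of_totalDegree_eq_one_of_field {K : Type*} [Field K] {p : MvPolynomial σ K}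
    (hp : p.totalDegree = 1) : Irreducible p := by
  refine irreducible_of_totalDegree_eq_one hp fun c hc => ?_
  obtain ⟨m, hm⟩ := ne_zero_iff.1 (fun h : p = 0 => by simp [h] at hp)
  exact isUnit_iff_ne_zero.2 fun h => hm (zero_dvd_iff.1 (h ▸ hc m))

theorem exists_eq_prod_mul_totalDegree_le {K ι : Type*} [Field K] [Fintype ι]
    {Λ : ι → MvPolynomial σ K} (hΛ : ∀ i, (Λ i).totalDegree = 1)
    (hΛ_ndvd : Pairwise fun i j => ¬Λ i ∣ Λ j) {p : MvPolynomial σ K} (hp : ∀ i, Λ i ∣ p)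
    {r : ℕ} (hr : p.totalDegree ≤ r) :
    ∃ q, p = (∏ i, Λ i) * q ∧ q.totalDegree ≤ r - Fintype.card ι ∧
      (r < Fintype.card ι → q = 0) := by
  obtain ⟨q, rfl⟩ := Fintype.prod_dvd_of_isRelPrime
    (fun i j hij => (irreducible_of_totalDegree_eq_one_of_field (hΛ i)).isRelPrime_iff_not_dvd.2
      (hΛ_ndvd hij)) hp
  have hΛ_ne (i : ι) : Λ i ≠ 0 := fun h => by simpa [h] using hΛ i
  have hprod_ne : ∏ i, Λ i ≠ 0 := Finset.prod_ne_zero_iff.2 fun i _ => hΛ_ne i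
  have hq (hq : q ≠ 0) : Fintype.card ι + q.totalDegree ≤ r := by
    rwa [totalDegree_mul_of_isDomain hprod_ne hq,
      totalDegree_finsetProd_of_isDomain _ fun i _ => hΛ_ne i, Finset.sum_congr rfl fun i _ => hΛ i,
      Finset.sum_const, smul_eq_mul, mul_one, Finset.card_univ] at hr
  refine ⟨q, rfl, ?_, fun hr => ?_⟩
  · rcases eq_or_ne q 0 with rfl | hq₀
    · simp
    · have := hq hq₀
      omega
  · by_contra hq₀
    have := hq hq₀
    omega

theorem exists_totalDegree_le_one_eval_eq_affineMap [CommRing R] [Fintype σ] [DecidableEq σ]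
    {E : Type*} [AddCommGroup E] [Module R E] (e : E ≃ₗ[R] σ → R) (ℓ : E →ᵃ[R] R) :
    ∃ Λ : MvPolynomial σ R, Λ.totalDegree ≤ 1 ∧ ∀ x, eval (e x) Λ = ℓ x := by
  refine ⟨C (ℓ 0) + ∑ i, C (ℓ.linear (e.symm (Pi.single i 1))) * X i, ?_, fun x => ?_⟩
  · refine (totalDegree_add _ _).trans (max_le (by simp) ((totalDegree_finsetSum _ _).trans ?_))
    exact Finset.sup_le fun i _ => (totalDegree_mul _ _).trans <| by
      rw [totalDegree_C, zero_add]
      exact (totalDegree_monomial_le (Finsupp.single i 1) (1 : R)).trans (by simp)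
  · have hlin := LinearMap.pi_apply_eq_sum_univ (ℓ.linear ∘ₗ e.symm.toLinearMap) (e x)
    have hsingle (i : σ) : (fun j => if i = j then (1 : R) else 0) = Pi.single i 1 := by
      ext j
      simp [Pi.single_apply, eq_comm]
    simp only [LinearMap.comp_apply, LinearEquiv.coe_coe, LinearEquiv.symm_apply_apply,
      hsingle, smul_eq_mul] at hlin
    have hdecomp : ℓ x = ℓ.linear x + ℓ 0 := congrFun ℓ.decomp x
    simp [hdecomp, hlin, add_comm, mul_comm]

theorem eq_zero_of_eval_eq_zero_of_interior_nonempty {E : Type*} [Fintype σ]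
    [NormedAddCommGroup E] [NormedSpace ℝ E] (e : E ≃L[ℝ] σ → ℝ) {p : MvPolynomial σ ℝ}
    {s : Set E} (hs : (interior s).Nonempty) (h : ∀ x ∈ s, eval (e x) p = 0) : p = 0 := by
  obtain ⟨z, hz⟩ := hs
  have hzero : (fun x => eval (e x) p) =ᶠ[nhds z] 0 :=
    Filter.eventually_of_mem (mem_interior_iff_mem_nhds.1 hz) h
  have hanalytic := AnalyticOnNhd.eval_continuousLinearMap (e : E →L[ℝ] σ → ℝ) p
  have := hanalytic.eqOn_zero_of_preconnected_of_eventuallyEq_zero isPreconnected_univ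
    (Set.mem_univ z) hzero
  refine funext fun y => ?_
  simpa using this (Set.mem_univ (e.symm y))

theorem dvd_of_eval_sub_smul_eq_zero {E : Type*} [Fintype σ] [NormedAddCommGroup E]
    [NormedSpace ℝ E] (e : E ≃L[ℝ] σ → ℝ) {Λ : MvPolynomial σ ℝ} {ℓ : E → ℝ}
    (hΛ : ∀ x, eval (e x) Λ = ℓ x) (v : E) {p : MvPolynomial σ ℝ} {s : Set E}
    (hs : (interior s).Nonempty) (hp : ∀ x ∈ s, eval (e (x - ℓ x • v)) p = 0) : Λ ∣ p := by
  set g : σ → MvPolynomial σ ℝ := fun j => X j - C (e v j) * Λ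
  have hg : bind₁ g p = 0 := eq_zero_of_eval_eq_zero_of_interior_nonempty e hs fun x hx => by
    have hsubst : (fun j => eval (e x) (g j)) = e (x - ℓ x • v) := by
      ext j
      simp [g, hΛ, mul_comm]
    rw [← hp x hx, ← hsubst]
    exact eval₂Hom_bind₁ _ _ _ _
  have hΛ_dvd : ∀ j, Λ ∣ X j - g j := fun j => ⟨C (e v j), by simp [g, mul_comm]⟩
  simpa [hg] using dvd_sub_bind₁_of_forall_dvd_X_sub hΛ_dvd p

end MvPolynomial

theorem sub_smul_mem_convexHull_image_ne {𝕜 ι E : Type*} [Field 𝕜] [LinearOrder 𝕜]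
    [IsStrictOrderedRing 𝕜] [AddCommGroup E] [Module 𝕜 E] {a : ι → E} {ℓ : E →ᵃ[𝕜] 𝕜}
    {i j₀ : ι} (hj₀ : j₀ ≠ i) (hℓi : ℓ (a i) = 1) (hℓ : ∀ j ≠ i, ℓ (a j) = 0) {x : E}
    (hx : x ∈ convexHull 𝕜 (Set.range a)) :
    x - ℓ x • (a i - a j₀) ∈ convexHull 𝕜 (a '' {j | j ≠ i}) := by
  refine convexHull_min (t := {y | y - ℓ y • (a i - a j₀) ∈ convexHull 𝕜 (a '' {j | j ≠ i})})
    ?_ ?_ hx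
  · rintro _ ⟨j, rfl⟩
    by_cases hji : j = i
    · subst hji
      simpa [hℓi] using subset_convexHull 𝕜 _ (Set.mem_image_of_mem a hj₀)
    · simpa [hℓ j hji] using subset_convexHull 𝕜 _ (Set.mem_image_of_mem a hji)
  · intro y hy z hz s t hs ht hst
    simp only [Set.mem_ofPred_eq]
    convert convex_convexHull 𝕜 _ hy hz hs ht hst using 1
    rw [Convex.combo_affine_apply hst]
    module

theorem poly_vanishing_on_facets_factorization_general
    {N : ℕ} (hN : 1 ≤ N)
    (a : Fin (N + 1) → EuclideanSpace ℝ (Fin N)) (ha : AffineIndependent ℝ a)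
    -- barycentric coordinates: the affine functions with `λᵢ(aⱼ) = δᵢⱼ`
    (lam : Fin (N + 1) → (EuclideanSpace ℝ (Fin N) →ᵃ[ℝ] ℝ))
    (hlam : ∀ i j, lam i (a j) = if i = j then (1 : ℝ) else 0)
    (r : ℕ) (f : EuclideanSpace ℝ (Fin N) → ℝ)
    (P : MvPolynomial (Fin N) ℝ) (hPdeg : P.totalDegree ≤ r)
    (hfP : ∀ x, f x = MvPolynomial.eval (x : Fin N → ℝ) P)
    -- `f` vanishes at every point of each facet `Fᵢ`
    (hvanish : ∀ i : Fin (N + 1), ∀ x ∈ convexHull ℝ (a '' {j | j ≠ i}), f x = 0) :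
    ∃ (g : EuclideanSpace ℝ (Fin N) → ℝ) (Q : MvPolynomial (Fin N) ℝ),
      Q.totalDegree ≤ r - (N + 1) ∧
      (∀ x, g x = MvPolynomial.eval (x : Fin N → ℝ) Q) ∧
      (∀ x, f x = (∏ i, lam i x) * g x) ∧
      (r < N + 1 → (∀ x, f x = 0) ∧ (∀ x, g x = 0)) := by
  have : Nontrivial (Fin (N + 1)) := Fin.nontrivial_iff_two_le.2 (by omega)
  let e := EuclideanSpace.equiv (Fin N) ℝ
  choose Λ hΛ_le hΛ using fun i =>
    exists_totalDegree_le_one_eval_eq_affineMap e.toLinearEquiv (lam i)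
  have hΛa (i j : Fin (N + 1)) : eval (e (a j)) (Λ i) = if i = j then 1 else 0 :=
    (hΛ i (a j)).trans (hlam i j)
  have hΛ_totalDegree (i : Fin (N + 1)) : (Λ i).totalDegree = 1 := by
    obtain ⟨j, hj⟩ := exists_ne i
    exact le_antisymm (hΛ_le i) <| Nat.one_le_iff_ne_zero.2 <|
      totalDegree_ne_zero_of_eval_ne (x := e (a i)) (y := e (a j)) (by simp [hΛa, hj.symm])
  have hK : (interior (convexHull ℝ (Set.range a))).Nonempty :=
    interior_convexHull_nonempty_iff_affineSpan_eq_top.2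
      (ha.affineSpan_eq_top_iff_card_eq_finrank_add_one.2 (by simp))
  have hΛ_dvd (i : Fin (N + 1)) : Λ i ∣ P := by
    obtain ⟨j, hj⟩ := exists_ne i
    refine dvd_of_eval_sub_smul_eq_zero e (hΛ i) (a i - a j) hK fun x hx => ?_
    rw [← hfP]
    exact hvanish i _ (sub_smul_mem_convexHull_image_ne hj (by simp [hlam])
      (fun k hk => by simp [hlam, hk.symm]) hx)
  have hΛ_ndvd : Pairwise fun i j => ¬Λ i ∣ Λ j := fun i j hij ⟨c, hc⟩ => by
    simpa [hΛa, hij] using congrArg (eval (e (a j))) hc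
  obtain ⟨Q, rfl, hQ_le, hQ_zero⟩ :=
    exists_eq_prod_mul_totalDegree_le hΛ_totalDegree hΛ_ndvd hΛ_dvd hPdeg
  have hfactor (x : EuclideanSpace ℝ (Fin N)) :
      f x = (∏ i, lam i x) * eval (x : Fin N → ℝ) Q := by
    rw [hfP, map_mul, map_prod]
    exact congrArg (· * _) (Finset.prod_congr rfl fun i _ => hΛ i x)
  refine ⟨fun x => eval (x : Fin N → ℝ) Q, Q, by simpa using hQ_le, fun _ => rfl, hfactor,
    fun hr => ?_⟩
  obtain rfl := hQ_zero (by simpa using hr)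
  simp [hfactor]

/-- A polynomial of total degree at most `r` on `ℝᴺ` that vanishes on every facet of a simplex
is divisible by the product of the barycentric coordinate functions: `f = (λ₀⋯λ_N)·g` with
`deg g ≤ r − (N+1)` (truncated subtraction: in particular if `r < N+1` then `f = 0` and `g = 0`). -/
theorem poly_vanishing_on_facets_factorization
    {N : ℕ} (hN : 1 ≤ N)
    (a : Fin (N + 1) → EuclideanSpace ℝ (Fin N)) (ha : AffineIndependent ℝ a)
    (K : Set (EuclideanSpace ℝ (Fin N))) (hK : K = convexHull ℝ (Set.range a))
    -- barycentric coordinates: the affine functions with `λᵢ(aⱼ) = δᵢⱼ`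
    (lam : Fin (N + 1) → (EuclideanSpace ℝ (Fin N) →ᵃ[ℝ] ℝ))
    (hlam : ∀ i j, lam i (a j) = if i = j then (1 : ℝ) else 0)
    (r : ℕ) (f : EuclideanSpace ℝ (Fin N) → ℝ)
    (P : MvPolynomial (Fin N) ℝ) (hPdeg : P.totalDegree ≤ r)
    (hfP : ∀ x, f x = MvPolynomial.eval (x : Fin N → ℝ) P)
    -- `f` vanishes at every point of each facet `Fᵢ`
    (hvanish : ∀ i : Fin (N + 1), ∀ x ∈ convexHull ℝ (a '' {j | j ≠ i}), f x = 0) :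
    ∃ (g : EuclideanSpace ℝ (Fin N) → ℝ) (Q : MvPolynomial (Fin N) ℝ),
      Q.totalDegree ≤ r - (N + 1) ∧
      (∀ x, g x = MvPolynomial.eval (x : Fin N → ℝ) Q) ∧
      (∀ x, f x = (∏ i, lam i x) * g x) ∧
      (r < N + 1 → (∀ x, f x = 0) ∧ (∀ x, g x = 0)) :=
  poly_vanishing_on_facets_factorization_general hN a ha lam hlam r f P hPdeg hfP hvanish
end
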